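/- arXiv:0709.1957 — 8 statements merged into one kernel-verified Lean document; each statement's English description precedes it below -/
import Mathlib

section
/- Suppose Φ : ℝ → ℝ satisfies: Φ(m) = m for every integer m, Φ(x) ∈ ℤ implies x ∈ ℤ, Φ'(x) ≥ 9/10 for all x, Φ'(m) = 100ρ for every integer m, and |Φ(x) − x| ≤ 10⁻⁴ for all x, where ρ ≥ 1. Then for every point (x,y) with x² + y² ≤ ρ², the point Ψ(x,y) = (Φ(x), 1/2 + y/Φ'(x)) is not in ℤ². -/
theorem stmt1 (Φ : ℝ → ℝ) (ρ : ℝ) (hρ : 1 ≤ ρ) (hdiff : Differentiable ℝ Φ)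
    (hfix : ∀ m : ℤ, Φ m = m)
    (hint : ∀ x : ℝ, (∃ m : ℤ, Φ x = m) → ∃ m : ℤ, x = m)
    (hd1 : ∀ x, 9/10 ≤ deriv Φ x)
    (hd2 : ∀ m : ℤ, deriv Φ m = 100 * ρ)
    (hdisp : ∀ x, |Φ x - x| ≤ 1 / 10^4) :
    ∀ x y : ℝ, x^2 + y^2 ≤ ρ^2 →
      ¬ ∃ m n : ℤ, Φ x = m ∧ 1/2 + y / deriv Φ x = n := by
  intro x y hxy ⟨m, n, h1, h2⟩
  obtain ⟨k, rfl⟩ := hint x ⟨m, h1⟩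
  rw [hd2 k] at h2
  have hρ0 : (0:ℝ) < 100 * ρ := by linarith
  have hy : |y| ≤ ρ := by
    rw [← Real.sqrt_sq (by linarith : (0:ℝ) ≤ ρ), ← Real.sqrt_sq_eq_abs]
    exact Real.sqrt_le_sqrt (by nlinarith [sq_nonneg ((k:ℝ))])
  have hyd : |y / (100 * ρ)| ≤ 1 / 100 := by
    rw [abs_div, abs_of_pos hρ0, div_le_div_iff₀ (by positivity) (by norm_num)]
    calc |y| * 100 ≤ ρ * 100 := by nlinarith [abs_nonneg y]
      _ ≤ 1 * (100 * ρ) := by ring_nf; linarith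
  have hn : y / (100 * ρ) = (n:ℝ) - 1/2 := by linarith
  rw [hn] at hyd
  rcases le_or_gt n 0 with h | h
  · have : (n:ℝ) ≤ 0 := by exact_mod_cast h
    rw [abs_le] at hyd; linarith
  · have : (1:ℝ) ≤ n := by exact_mod_cast h
    rw [abs_le] at hyd; linarith
end

section
/- Suppose Φ : ℝ → ℝ is injective with Φ'(x) ≥ 9/10 and |Φ(x) − x| ≤ 10⁻⁴ for all x, and let Ψ(x,y) = (Φ(x), 1/2 + y/Φ'(x)). If D ⊂ ℝ² is any disk of radius 1/3, then Ψ(D) is aperiodic: the difference of any two points of Ψ(D) is never a nonzero integer vector. -/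
/-!
Write `Ψ p - Ψ q = (m, n)` with `p, q` in a disk of radius `1/3`. Since `Φ` moves points by at
most `10⁻⁴`, `|m| = |Φ p.1 - Φ q.1| ≤ 2/3 + 2 · 10⁻⁴ < 1`, so `m = 0` and `p.1 = q.1` by
injectivity. Then both second coordinates are divided by the same `Φ'(p.1) ≥ 9/10`, so
`|n| ≤ (2/3) / (9/10) < 1` and `n = 0`.
-/

lemma Int.eq_zero_of_abs_cast_lt_one {m : ℤ} (h : |(m : ℝ)| < 1) : m = 0 :=
  Int.abs_lt_one_iff.mp (by exact_mod_cast h)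

lemma abs_le_of_sq_add_sq_le {a b r : ℝ} (hr : 0 ≤ r) (h : a ^ 2 + b ^ 2 ≤ r ^ 2) :
    |a| ≤ r ∧ |b| ≤ r :=
  ⟨abs_le_of_sq_le_sq (by nlinarith [sq_nonneg b]) hr,
    abs_le_of_sq_le_sq (by nlinarith [sq_nonneg a]) hr⟩

lemma abs_sub_le_two_mul_of_mem_disk {p q c : ℝ × ℝ} {r : ℝ} (hr : 0 ≤ r)
    (hp : (p.1 - c.1) ^ 2 + (p.2 - c.2) ^ 2 ≤ r ^ 2)
    (hq : (q.1 - c.1) ^ 2 + (q.2 - c.2) ^ 2 ≤ r ^ 2) :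
    |p.1 - q.1| ≤ 2 * r ∧ |p.2 - q.2| ≤ 2 * r := by
  obtain ⟨hp1, hp2⟩ := abs_le_of_sq_add_sq_le hr hp
  obtain ⟨hq1, hq2⟩ := abs_le_of_sq_add_sq_le hr hq
  constructor
  · linarith [abs_sub_le p.1 c.1 q.1, abs_sub_comm c.1 q.1]
  · linarith [abs_sub_le p.2 c.2 q.2, abs_sub_comm c.2 q.2]

lemma abs_sub_le_of_abs_sub_self_le {f : ℝ → ℝ} {δ : ℝ} (hf : ∀ x, |f x - x| ≤ δ) (x y : ℝ) :
    |f x - f y| ≤ |x - y| + 2 * δ := by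
  have hxy := abs_sub_le (f x) x (f y)
  have hyx := abs_sub_le x y (f y)
  linarith [hf x, hf y, abs_sub_comm y (f y)]

theorem stmt2_general (Φ : ℝ → ℝ) (hinj : Function.Injective Φ)
    (hd : ∀ x, 9/10 ≤ deriv Φ x) (hdisp : ∀ x, |Φ x - x| ≤ 1 / 10^4)
    (Ψ : ℝ × ℝ → ℝ × ℝ)
    (hΨ : ∀ p : ℝ × ℝ, Ψ p = (Φ p.1, 1/2 + p.2 / deriv Φ p.1))
    (c : ℝ × ℝ) :
    ∀ p q : ℝ × ℝ,
      (p.1 - c.1)^2 + (p.2 - c.2)^2 ≤ (1/3)^2 →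
      (q.1 - c.1)^2 + (q.2 - c.2)^2 ≤ (1/3)^2 →
      (∃ m n : ℤ, Ψ p - Ψ q = ((m : ℝ), (n : ℝ))) → Ψ p = Ψ q := by
  intro p q hp hq ⟨m, n, hmn⟩
  have hm : Φ p.1 - Φ q.1 = m := by simpa [hΨ] using congrArg Prod.fst hmn
  have hn : p.2 / deriv Φ p.1 - q.2 / deriv Φ q.1 = n := by
    simpa [hΨ] using congrArg Prod.snd hmn
  obtain ⟨hpq1, hpq2⟩ := abs_sub_le_two_mul_of_mem_disk (by norm_num) hp hq
  have hm0 : m = 0 := Int.eq_zero_of_abs_cast_lt_one <| by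
    rw [← hm]
    linarith [abs_sub_le_of_abs_sub_self_le hdisp p.1 q.1]
  have hx : p.1 = q.1 := hinj <| sub_eq_zero.mp <| by rw [hm, hm0, Int.cast_zero]
  rw [hx, ← sub_div] at hn
  have hd_pos : 0 < deriv Φ q.1 := by linarith [hd q.1]
  have hn0 : n = 0 := Int.eq_zero_of_abs_cast_lt_one <| by
    rw [← hn, abs_div, abs_of_pos hd_pos, div_lt_one hd_pos]
    linarith [hd q.1]
  rw [← sub_eq_zero, hmn, hm0, hn0, Int.cast_zero, Prod.mk_zero_zero]

theorem stmt2 (Φ : ℝ → ℝ) (hdiff : Differentiable ℝ Φ) (hinj : Function.Injective Φ)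
    (hd : ∀ x, 9/10 ≤ deriv Φ x) (hdisp : ∀ x, |Φ x - x| ≤ 1 / 10^4)
    (Ψ : ℝ × ℝ → ℝ × ℝ)
    (hΨ : ∀ p : ℝ × ℝ, Ψ p = (Φ p.1, 1/2 + p.2 / deriv Φ p.1))
    (c : ℝ × ℝ) :
    ∀ p q : ℝ × ℝ,
      (p.1 - c.1)^2 + (p.2 - c.2)^2 ≤ (1/3)^2 →
      (q.1 - c.1)^2 + (q.2 - c.2)^2 ≤ (1/3)^2 →
      (∃ m n : ℤ, Ψ p - Ψ q = ((m : ℝ), (n : ℝ))) → Ψ p = Ψ q :=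
  stmt2_general Φ hinj hd hdisp Ψ hΨ c
end

section
/- There exists a function Φ : ℝ → ℝ which is a smooth increasing diffeomorphism of ℝ satisfying: Φ(x+1) = Φ(x)+1 for all x, Φ(m) = m for all integers m, Φ'(x) ≥ 9/10 for all x, Φ'(0) = 100ρ, and |Φ(x) − x| ≤ 10⁻⁴ for all x, for any given ρ ≥ 1. -/
open Real

lemma frac_helper (M N D : ℝ) (hD : D ≠ 0) :
    (1/(1+(N/D)^2)) * (M/D^2) = M/(D^2+N^2) := by
  have h2 : D^2 + N^2 ≠ 0 := by positivity
  field_simp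

noncomputable def myD (a x : ℝ) : ℝ := (a+2) - a * Real.cos (2*π*x)

noncomputable def myE (a x : ℝ) : ℝ := (a^2+2*a+2) - (a^2+2*a) * Real.cos (2*π*x)

noncomputable def myPhi (a x : ℝ) : ℝ :=
  x + (10^4*π)⁻¹ * Real.arctan (a * Real.sin (2*π*x) / myD a x)

lemma myD_ge (a x : ℝ) (ha : 0 ≤ a) : 2 ≤ myD a x := by
  have := Real.cos_le_one (2*π*x)
  unfold myD
  nlinarith

lemma myE_ge (a x : ℝ) (ha : 0 ≤ a) : 2 ≤ myE a x := by
  have := Real.cos_le_one (2*π*x)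
  unfold myE
  nlinarith

lemma myPhi_hasDerivAt (a : ℝ) (ha : 0 ≤ a) (x : ℝ) :
    HasDerivAt (myPhi a)
      (1 - (10^4:ℝ)⁻¹ + 2*(10^4:ℝ)⁻¹*(a+1) / myE a x) x := by
  have hπ : (0:ℝ) < π := Real.pi_pos
  have hDne : myD a x ≠ 0 := by have := myD_ge a x ha; linarith
  have hEne : myE a x ≠ 0 := by have := myE_ge a x ha; linarith
  have h2x : HasDerivAt (fun x : ℝ => 2*π*x) (2*π) x := by
    simpa using (hasDerivAt_id x).const_mul (2*π)
  have hsin0 : HasDerivAt (fun x : ℝ => Real.sin (2*π*x)) (Real.cos (2*π*x) * (2*π)) x := by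
    exact (Real.hasDerivAt_sin (2*π*x)).comp x h2x
  have hcos0 : HasDerivAt (fun x : ℝ => Real.cos (2*π*x)) (-Real.sin (2*π*x) * (2*π)) x := by
    exact (Real.hasDerivAt_cos (2*π*x)).comp x h2x
  have hsin : HasDerivAt (fun x : ℝ => a * Real.sin (2*π*x)) (a * (Real.cos (2*π*x) * (2*π))) x :=
    hsin0.const_mul a
  have hcos : HasDerivAt (fun x : ℝ => myD a x) (0 - a * (-Real.sin (2*π*x) * (2*π))) x :=
    (hasDerivAt_const x (a+2)).sub (hcos0.const_mul a)
  have hq : HasDerivAt (fun x => a * Real.sin (2*π*x) / myD a x)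
      ((a * (Real.cos (2*π*x) * (2*π)) * myD a x
        - a * Real.sin (2*π*x) * (0 - a * (-Real.sin (2*π*x) * (2*π)))) / myD a x ^ 2) x :=
    hsin.div hcos hDne
  have hat := (Real.hasDerivAt_arctan (a * Real.sin (2*π*x) / myD a x)).comp x hq
  have hΦx := (hasDerivAt_id x).add (hat.const_mul ((10^4*π)⁻¹))
  refine HasDerivAt.congr_deriv hΦx ?_
  rw [frac_helper _ _ _ hDne]
  have hsc : Real.sin (2*π*x)^2 + Real.cos (2*π*x)^2 = 1 := Real.sin_sq_add_cos_sq _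
  have hden : myD a x ^2 + (a * Real.sin (2*π*x))^2 = 2 * myE a x := by
    unfold myD myE
    linear_combination a^2 * hsc
  have hnum : a * (Real.cos (2*π*x) * (2*π)) * myD a x
      - a * Real.sin (2*π*x) * (0 - a * (-Real.sin (2*π*x) * (2*π)))
      = 2*π*a*((a+2)*Real.cos (2*π*x) - a) := by
    unfold myD
    linear_combination (-2*π*a^2) * hsc
  rw [hnum, hden]
  have hπne : π ≠ 0 := ne_of_gt hπ
  rw [eq_comm]
  field_simp
  unfold myE
  ring

lemma myPhi_contDiff (a : ℝ) (ha : 0 ≤ a) : ContDiff ℝ (⊤ : ℕ∞) (myPhi a) := by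
  have hDne : ∀ x, myD a x ≠ 0 := fun x => by have := myD_ge a x ha; linarith
  unfold myPhi myD
  apply contDiff_id.add
  apply ContDiff.mul contDiff_const
  apply Real.contDiff_arctan.comp
  apply ContDiff.div
  · exact contDiff_const.mul ((Real.contDiff_sin).comp (contDiff_const.mul contDiff_id))
  · exact contDiff_const.sub (contDiff_const.mul ((Real.contDiff_cos).comp (contDiff_const.mul contDiff_id)))
  · intro x; have := hDne x; unfold myD at this; exact this

lemma myPhi_bound (a x : ℝ) : |myPhi a x - x| ≤ 1/10^4 := by
  have hπ : (0:ℝ) < π := Real.pi_pos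
  have h1 : myPhi a x - x = (10^4*π)⁻¹ * Real.arctan (a * Real.sin (2*π*x) / myD a x) := by
    unfold myPhi; ring
  rw [h1, abs_mul]
  have h2 : |Real.arctan (a * Real.sin (2*π*x) / myD a x)| ≤ π/2 := by
    have := Real.arctan_lt_pi_div_two (a * Real.sin (2*π*x) / myD a x)
    have := Real.neg_pi_div_two_lt_arctan (a * Real.sin (2*π*x) / myD a x)
    rw [abs_le]; constructor <;> linarith
  have h3 : |((10:ℝ)^4*π)⁻¹| = ((10:ℝ)^4*π)⁻¹ := by
    rw [abs_of_pos]; positivity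
  rw [h3]
  calc ((10:ℝ)^4*π)⁻¹ * |Real.arctan (a * Real.sin (2*π*x) / myD a x)|
      ≤ ((10:ℝ)^4*π)⁻¹ * (π/2) := by
        apply mul_le_mul_of_nonneg_left h2; positivity
    _ ≤ 1/10^4 := by
        rw [mul_comm, inv_eq_one_div, ← mul_div_assoc]
        rw [div_le_div_iff₀ (by positivity) (by positivity)]
        nlinarith

theorem stmt4 (ρ : ℝ) (hρ : 1 ≤ ρ) :
    ∃ Φ : ℝ → ℝ, ContDiff ℝ (⊤ : ℕ∞) Φ ∧ StrictMono Φ ∧ Function.Bijective Φ ∧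
      (∀ x, Φ (x + 1) = Φ x + 1) ∧ (∀ m : ℤ, Φ m = m) ∧
      (∀ x, 9/10 ≤ deriv Φ x) ∧ deriv Φ 0 = 100 * ρ ∧
      ∀ x, |Φ x - x| ≤ 1 / 10^4 := by
  have hπ : (0:ℝ) < π := Real.pi_pos
  set a : ℝ := 10^4 * (100*ρ - 1) with ha_def
  have ha : (990000:ℝ) ≤ a := by rw [ha_def]; nlinarith
  have ha0 : (0:ℝ) ≤ a := by linarith
  have hG910 : ∀ x, 9/10 ≤ 1 - (10^4:ℝ)⁻¹ + 2*(10^4:ℝ)⁻¹*(a+1) / myE a x := by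
    intro x
    have hE2 := myE_ge a x ha0
    have h1 : 0 < 2*(10^4:ℝ)⁻¹*(a+1) / myE a x := by positivity
    norm_num at h1 ⊢
    linarith
  have hderiv : ∀ x, deriv (myPhi a) x
      = 1 - (10^4:ℝ)⁻¹ + 2*(10^4:ℝ)⁻¹*(a+1) / myE a x :=
    fun x => (myPhi_hasDerivAt a ha0 x).deriv
  have hcd := myPhi_contDiff a ha0
  have hmono : StrictMono (myPhi a) := by
    apply strictMono_of_deriv_pos
    intro x
    rw [hderiv x]
    have := hG910 x
    linarith
  refine ⟨myPhi a, hcd, hmono, ⟨hmono.injective, ?_⟩, ?_, ?_, ?_, ?_, fun x => myPhi_bound a x⟩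
  · -- surjective
    intro y
    have hb1 := myPhi_bound a (y-1)
    have hb2 := myPhi_bound a (y+1)
    rw [abs_le] at hb1 hb2
    have h1 : myPhi a (y-1) ≤ y := by
      have := hb1.2; norm_num at this; linarith
    have h2 : y ≤ myPhi a (y+1) := by
      have := hb2.1; norm_num at this; linarith
    have hsub : Set.Icc (myPhi a (y-1)) (myPhi a (y+1)) ⊆ myPhi a '' Set.Icc (y-1) (y+1) :=
      intermediate_value_Icc (by linarith) hcd.continuous.continuousOn
    obtain ⟨x, _, hx⟩ := hsub ⟨h1, h2⟩
    exact ⟨x, hx⟩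
  · -- periodicity
    intro x
    have harg : 2*π*(x+1) = 2*π*x + 2*π := by ring
    unfold myPhi myD
    rw [harg, Real.sin_add_two_pi, Real.cos_add_two_pi]
    ring
  · -- fixes integers
    intro m
    have hs : Real.sin (2*π*(m:ℝ)) = 0 := by
      have h : 2*π*(m:ℝ) = ((2*m : ℤ):ℝ) * π := by push_cast; ring
      rw [h, Real.sin_int_mul_pi]
    unfold myPhi
    rw [hs, mul_zero, zero_div, Real.arctan_zero, mul_zero, add_zero]
  · -- deriv lower bound
    intro x
    rw [hderiv x]; exact hG910 x
  · -- deriv at 0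
    rw [hderiv 0]
    have h0 : myE a 0 = 2 := by
      unfold myE
      norm_num
    rw [h0, ha_def]
    ring
end

section
/- Let E ⊂ ℝ⁴ be an open convex set, let π₂ : ℝ⁴ → ℝ² be projection onto the last two coordinates, and suppose π₂(E) is a disk of radius S centered at c, with the fiber π₂⁻¹(c) ∩ E having 2-dimensional area at least π/9. Then for any point p in the concentric disk of radius S/2, the fiber π₂⁻¹(p) ∩ E contains a translate of a set of area at least π/36; consequently vol₄(E) ≥ (π/36)·π(S/2)² = π²S²/144. -/
open MeasureTheory Real ENNReal

theorem stmt5 (E : Set ((ℝ × ℝ) × (ℝ × ℝ))) (hE : IsOpen E) (hconv : Convex ℝ E)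
    (c : ℝ × ℝ) (S : ℝ)
    (hproj : Prod.snd '' E = {p : ℝ × ℝ | (p.1 - c.1)^2 + (p.2 - c.2)^2 < S^2})
    (hfib : ENNReal.ofReal (π / 9) ≤ volume {w : ℝ × ℝ | (w, c) ∈ E}) :
    (∀ p : ℝ × ℝ, (p.1 - c.1)^2 + (p.2 - c.2)^2 < (S/2)^2 →
      ENNReal.ofReal (π / 36) ≤ volume {w : ℝ × ℝ | (w, p) ∈ E}) ∧
    ENNReal.ofReal (π^2 * S^2 / 144) ≤ volume E := by
  have hfin : Module.finrank ℝ (ℝ × ℝ) = 2 := by simp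
  have key : ∀ p : ℝ × ℝ, (p.1 - c.1)^2 + (p.2 - c.2)^2 < (S/2)^2 →
      ENNReal.ofReal (π / 36) ≤ volume {w : ℝ × ℝ | (w, p) ∈ E} := by
    intro p hp
    have hqmem : ((2*p.1 - c.1, 2*p.2 - c.2) : ℝ × ℝ) ∈ Prod.snd '' E := by
      rw [hproj]
      simp only [Set.mem_setOf_eq]
      nlinarith [hp]
    obtain ⟨z, hzE, hz2⟩ := hqmem
    have hsub : {w : ℝ × ℝ | (w, c) ∈ E} ⊆
        (((1:ℝ)/2) • ·) ⁻¹' ((· + ((1:ℝ)/2) • z.1) ⁻¹' {w : ℝ × ℝ | (w, p) ∈ E}) := by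
      intro w hw
      have hmid := hconv hw hzE (by norm_num : (0:ℝ) ≤ 1/2) (by norm_num : (0:ℝ) ≤ 1/2)
        (by norm_num)
      simp only [Set.mem_preimage, Set.mem_setOf_eq]
      have : ((1:ℝ)/2) • (w, c) + ((1:ℝ)/2) • z = (((1:ℝ)/2) • w + ((1:ℝ)/2) • z.1, p) := by
        ext <;> simp [Prod.smul_def, smul_eq_mul] <;>
          (rw [show z.2 = ((2*p.1 - c.1, 2*p.2 - c.2) : ℝ × ℝ) from hz2]; ring)
      rw [this] at hmid
      exact hmid
    have hle := measure_mono (μ := (volume : Measure (ℝ × ℝ))) hsub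
    rw [Measure.addHaar_preimage_smul volume (by norm_num : (1:ℝ)/2 ≠ 0),
      measure_preimage_add_right, hfin] at hle
    have h4 : ENNReal.ofReal |(((1:ℝ)/2) ^ 2)⁻¹| = 4 := by
      norm_num
    rw [h4] at hle
    have hle2 : (4 : ENNReal) * ENNReal.ofReal (π / 36) ≤ 4 * volume {w : ℝ × ℝ | (w, p) ∈ E} := by
      refine le_trans (le_of_eq ?_) (hfib.trans hle)
      rw [show (4:ENNReal) = ENNReal.ofReal 4 by norm_num, ← ENNReal.ofReal_mul (by norm_num)]
      congr 1
      ring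
    exact (ENNReal.mul_le_mul_iff_right (by norm_num) (by norm_num)).mp hle2
  refine ⟨key, ?_⟩
  -- S ≠ 0
  have hfibne : {w : ℝ × ℝ | (w, c) ∈ E}.Nonempty := by
    by_contra h
    rw [Set.not_nonempty_iff_eq_empty] at h
    rw [h, measure_empty] at hfib
    simp only [nonpos_iff_eq_zero, ENNReal.ofReal_eq_zero] at hfib
    nlinarith [pi_pos]
  obtain ⟨w₀, hw₀⟩ := hfibne
  have hcmem : c ∈ Prod.snd '' E := ⟨(w₀, c), hw₀, rfl⟩
  have hS2 : 0 < S^2 := by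
    rw [hproj] at hcmem
    simp only [Set.mem_setOf_eq, sub_self] at hcmem
    nlinarith [hcmem]
  have hSne : S ≠ 0 := by intro h; rw [h] at hS2; norm_num at hS2
  -- the disk
  set D : Set (ℝ × ℝ) := {p : ℝ × ℝ | (p.1 - c.1)^2 + (p.2 - c.2)^2 < (S/2)^2} with hD
  have hDopen : IsOpen D := by
    have : Continuous fun p : ℝ × ℝ => (p.1 - c.1)^2 + (p.2 - c.2)^2 := by fun_prop
    exact isOpen_lt this continuous_const
  have hDvol : volume D = ENNReal.ofReal (π * S^2 / 4) := by
    have hpre : Complex.measurableEquivRealProd ⁻¹' D = Metric.ball ⟨c.1, c.2⟩ (|S|/2) := by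
      ext z
      simp only [Set.mem_preimage, Metric.mem_ball, Complex.dist_eq_re_im, hD,
        Set.mem_setOf_eq, Complex.measurableEquivRealProd_apply]
      rw [Real.sqrt_lt' (by positivity : (0:ℝ) < |S|/2)]
      constructor <;> intro h <;> nlinarith [abs_nonneg S, sq_abs S]
    have := Complex.volume_preserving_equiv_real_prod.measure_preimage
      (hDopen.measurableSet.nullMeasurableSet)
    rw [hpre, Complex.volume_ball] at this
    rw [← this]
    rw [← ENNReal.ofReal_pow (by positivity), ← ENNReal.ofReal_coe_nnreal, NNReal.coe_real_pi,
      ← ENNReal.ofReal_mul (by positivity)]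
    congr 1
    rw [div_pow, sq_abs]
    ring
  have hEvol : volume E = ∫⁻ y, volume ((fun x => (x, y)) ⁻¹' E) := by
    rw [Measure.volume_eq_prod, Measure.prod_apply_symm hE.measurableSet]
  calc ENNReal.ofReal (π^2 * S^2 / 144)
      = ENNReal.ofReal (π / 36) * ENNReal.ofReal (π * S^2 / 4) := by
        rw [← ENNReal.ofReal_mul (by positivity)]
        congr 1
        ring
    _ = ENNReal.ofReal (π / 36) * volume D := by rw [hDvol]
    _ = ∫⁻ y in D, ENNReal.ofReal (π / 36) := by rw [setLIntegral_const]
    _ ≤ ∫⁻ y in D, volume ((fun x => (x, y)) ⁻¹' E) := by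
        refine setLIntegral_mono (measurable_measure_prodMk_right hE.measurableSet) ?_
        intro y hy
        exact key y hy
    _ ≤ ∫⁻ y, volume ((fun x => (x, y)) ⁻¹' E) := setLIntegral_le_lintegral _ _
    _ = volume E := hEvol.symm
end

section
/- Let L : ℝ⁴ → ℝ⁴ be a linear symplectomorphism and let B = B⁴(R). If W is a 2-plane parallel to the (x₁,y₁)-plane such that W ∩ L(B) is contained in a disk of radius 1/3 in W, and Ψ(D) is aperiodic for every radius-1/3 disk D, then the composition Q ∘ Ψ̃ ∘ L is injective on B, where Ψ̃ = Ψ × id and Q : ℝ⁴ → (ℝ²/ℤ²) × ℝ² is the quotient by ℤ² acting on the first two coordinates. -/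
/-- The standard symplectic form on ℝ⁴ = (ℝ×ℝ)×(ℝ×ℝ), ω = dx₁∧dy₁ + dx₂∧dy₂. -/
def omega2 (u v : (ℝ × ℝ) × (ℝ × ℝ)) : ℝ :=
  u.1.1 * v.1.2 - u.1.2 * v.1.1 + u.2.1 * v.2.2 - u.2.2 * v.2.1

theorem stmt9 (R : ℝ) (L : ((ℝ × ℝ) × (ℝ × ℝ)) ≃ₗ[ℝ] ((ℝ × ℝ) × (ℝ × ℝ)))
    (hL : ∀ u v, omega2 (L u) (L v) = omega2 u v)
    (Ψ : ℝ × ℝ → ℝ × ℝ) (hΨ : Function.Bijective Ψ)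
    (B : Set ((ℝ × ℝ) × (ℝ × ℝ)))
    (hB : B = {z | z.1.1^2 + z.1.2^2 + z.2.1^2 + z.2.2^2 < R^2})
    -- every slice of L(B) by a 2-plane parallel to the (x₁,y₁)-plane lies in a
    -- disk of radius 1/3
    (hslice : ∀ w : ℝ × ℝ, ∃ d : ℝ × ℝ, ∀ z ∈ B, (L z).2 = w →
      ((L z).1.1 - d.1)^2 + ((L z).1.2 - d.2)^2 ≤ (1/3)^2)
    -- Ψ(D) is aperiodic for every disk D of radius 1/3
    (haper : ∀ d : ℝ × ℝ, ∀ p q : ℝ × ℝ,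
      (p.1 - d.1)^2 + (p.2 - d.2)^2 ≤ (1/3)^2 →
      (q.1 - d.1)^2 + (q.2 - d.2)^2 ≤ (1/3)^2 →
      (∃ m n : ℤ, Ψ p - Ψ q = ((m : ℝ), (n : ℝ))) → Ψ p = Ψ q) :
    -- Q ∘ Ψ̃ ∘ L is injective on B : equality in the quotient means the
    -- difference is an integer vector in the first two coordinates and zero in
    -- the last two
    ∀ p ∈ B, ∀ q ∈ B,
      (∃ m n : ℤ, (Ψ (L p).1, (L p).2) - (Ψ (L q).1, (L q).2)
          = (((m : ℝ), (n : ℝ)), (0, 0))) →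
      p = q := by
  intro p hp q hq ⟨m, n, hmn⟩
  have h1 : Ψ (L p).1 - Ψ (L q).1 = ((m : ℝ), (n : ℝ)) := congrArg Prod.fst hmn
  have h2 : (L p).2 - (L q).2 = (0, 0) := congrArg Prod.snd hmn
  have h2' : (L p).2 = (L q).2 := by
    have := sub_eq_zero.mp (h2.trans (Prod.mk_zero_zero))
    exact this
  obtain ⟨d, hd⟩ := hslice (L p).2
  have hpd := hd p hp rfl
  have hqd := hd q hq h2'.symm
  have hΨeq : Ψ (L p).1 = Ψ (L q).1 := haper d _ _ hpd hqd ⟨m, n, h1⟩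
  have hfst : (L p).1 = (L q).1 := hΨ.1 hΨeq
  have : L p = L q := Prod.ext hfst h2'
  exact L.injective this
end

section
/- For any radius R ≥ 1/3, the open ball B⁴(R) with the standard symplectic form admits a symplectic embedding into Σ × B²(10R²), where Σ is a once-punctured torus (genus 1 surface with one boundary component) equipped with an area form of total area 1. -/
set_option maxHeartbeats 4000000

/-- The wrapping symplectomorphism encoding the embedding. -/
noncomputable def fm (R : ℝ) : ((ℝ × ℝ) × (ℝ × ℝ)) → ((ℝ × ℝ) × (ℝ × ℝ)) := fun z =>
  ((-(2*R*z.1.2),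
    (2*R)⁻¹ * z.1.1 + 1/2 + (1 - Real.cos (2*Real.pi*(2*R)*z.1.2)) * (2*R*z.2.2)),
   ((2*R)⁻¹ * z.2.1 + 2*R*z.1.2 - (2*Real.pi)⁻¹ * Real.sin (2*Real.pi*(2*R)*z.1.2),
    2*R*z.2.2))

theorem fm_abs_aux {x R : ℝ} (hR : 0 < R) (h : x^2 < R^2) : -R < x ∧ x < R := by
  constructor <;> nlinarith

theorem fm_smooth (R : ℝ) : ContDiff ℝ (⊤ : ℕ∞) (fm R) := by
  unfold fm
  have hc : ContDiff ℝ (⊤ : ℕ∞) (fun z : (ℝ × ℝ) × (ℝ × ℝ) => 2*Real.pi*(2*R)*z.1.2) := by fun_prop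
  have h1 : ContDiff ℝ (⊤ : ℕ∞) (fun z : (ℝ × ℝ) × (ℝ × ℝ) => Real.cos (2*Real.pi*(2*R)*z.1.2)) :=
    Real.contDiff_cos.comp hc
  have h2 : ContDiff ℝ (⊤ : ℕ∞) (fun z : (ℝ × ℝ) × (ℝ × ℝ) => Real.sin (2*Real.pi*(2*R)*z.1.2)) :=
    Real.contDiff_sin.comp hc
  fun_prop

theorem fm_symp (R : ℝ) (hR : R ≠ 0) (z u v : (ℝ × ℝ) × (ℝ × ℝ)) :
    omega2 (fderiv ℝ (fm R) z u) (fderiv ℝ (fm R) z v) = omega2 u v := by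
  have hid := hasFDerivAt_id (𝕜 := ℝ) z
  have h12 := hid.fst.snd
  have hA := (h12.const_mul (2*R)).neg
  have h11 := hid.fst.fst
  have hB1 := (h11.const_mul (2*R)⁻¹).add_const (1/2)
  have hw := h12.const_mul (2*Real.pi*(2*R))
  have hcos := (Real.hasDerivAt_cos (2*Real.pi*(2*R)*z.1.2)).comp_hasFDerivAt z hw
  have hone := hcos.const_sub 1
  have h22 := hid.snd.snd
  have hsy := h22.const_mul (2*R)
  have hB := hB1.add (hone.mul hsy)
  have h21 := hid.snd.fst
  have hsin := (Real.hasDerivAt_sin (2*Real.pi*(2*R)*z.1.2)).comp_hasFDerivAt z hw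
  have hC := (((h21.const_mul (2*R)⁻¹).add (h12.const_mul (2*R))).sub
    (hsin.const_mul (2*Real.pi)⁻¹))
  have htot := HasFDerivAt.prodMk (HasFDerivAt.prodMk hA hB) (HasFDerivAt.prodMk hC hsy)
  have hf : HasFDerivAt (fm R) _ z := htot
  rw [hf.fderiv]
  simp only [ContinuousLinearMap.prod_apply, ContinuousLinearMap.add_apply,
    ContinuousLinearMap.sub_apply, ContinuousLinearMap.neg_apply,
    ContinuousLinearMap.smul_apply, ContinuousLinearMap.comp_apply,
    ContinuousLinearMap.coe_fst', ContinuousLinearMap.coe_snd',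
    ContinuousLinearMap.id_apply, smul_eq_mul, omega2, Function.comp_apply, id_eq]
  have hπ : (2*Real.pi) ≠ 0 := by positivity
  field_simp
  ring

/-- Main Lemma: for `R ≥ 1/3` the ball `B⁴(R)` symplectically embeds into
`Σ × B²(10R²)`, where `Σ` is the once-punctured torus `(ℝ²/ℤ²) \ {0}` of area 1.
The embedding is encoded by a map `f : B⁴(R) → ℝ² × ℝ²` which is smooth and
symplectic on the ball, whose first factor avoids the integer lattice (the
orbit of the puncture), whose second factor lies in `B²(10R²)`, and which is
injective after quotienting the first factor by ℤ². -/
theorem stmt10 (R : ℝ) (hR : 1/3 ≤ R) :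
    ∃ f : ((ℝ × ℝ) × (ℝ × ℝ)) → ((ℝ × ℝ) × (ℝ × ℝ)),
      (ContDiffOn ℝ (⊤ : ℕ∞) f {z | z.1.1^2 + z.1.2^2 + z.2.1^2 + z.2.2^2 < R^2}) ∧
      (∀ z ∈ {z : (ℝ × ℝ) × (ℝ × ℝ) | z.1.1^2 + z.1.2^2 + z.2.1^2 + z.2.2^2 < R^2},
        ∀ u v, omega2 (fderiv ℝ f z u) (fderiv ℝ f z v) = omega2 u v) ∧
      (∀ z ∈ {z : (ℝ × ℝ) × (ℝ × ℝ) | z.1.1^2 + z.1.2^2 + z.2.1^2 + z.2.2^2 < R^2},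
        ¬ ∃ m n : ℤ, (f z).1 = ((m : ℝ), (n : ℝ))) ∧
      (∀ z ∈ {z : (ℝ × ℝ) × (ℝ × ℝ) | z.1.1^2 + z.1.2^2 + z.2.1^2 + z.2.2^2 < R^2},
        (f z).2.1^2 + (f z).2.2^2 < (10 * R^2)^2) ∧
      (∀ p ∈ {z : (ℝ × ℝ) × (ℝ × ℝ) | z.1.1^2 + z.1.2^2 + z.2.1^2 + z.2.2^2 < R^2},
        ∀ q ∈ {z : (ℝ × ℝ) × (ℝ × ℝ) | z.1.1^2 + z.1.2^2 + z.2.1^2 + z.2.2^2 < R^2},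
        (∃ m n : ℤ, f p - f q = (((m : ℝ), (n : ℝ)), (0, 0))) → p = q) := by
  have hR0 : (0:ℝ) < R := lt_of_lt_of_le (by norm_num) hR
  have hRne : R ≠ 0 := ne_of_gt hR0
  have h2R : (2*R) ≠ 0 := by positivity
  have hkey : (2*R) * ((2*R)⁻¹) = 1 := mul_inv_cancel₀ h2R
  refine ⟨fm R, (fm_smooth R).contDiffOn, fun z _ u v => fm_symp R hRne z u v, ?_, ?_, ?_⟩
  · -- avoidance of the lattice (the puncture orbit)
    rintro z hz ⟨m, n, h⟩
    simp only [Set.mem_setOf_eq] at hz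
    simp only [fm, Prod.mk.injEq] at h
    obtain ⟨h1, h2⟩ := h
    have hcos : Real.cos (2*Real.pi*(2*R)*z.1.2) = 1 := by
      rw [show 2*Real.pi*(2*R)*z.1.2 = ((-m : ℤ) : ℝ) * (2*Real.pi) by
        push_cast; linear_combination (-(2*Real.pi)) * h1]
      exact Real.cos_int_mul_two_pi _
    rw [hcos] at h2
    have h2' : z.1.1 + R = 2*R*(n:ℝ) := by
      linear_combination (2*R)*h2 - z.1.1*hkey
    have hx1 : z.1.1^2 < R^2 := by
      linarith [sq_nonneg z.1.2, sq_nonneg z.2.1, sq_nonneg z.2.2]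
    obtain ⟨hl, hr⟩ := fm_abs_aux hR0 hx1
    have hn0 : (0:ℝ) < (n:ℝ) := by nlinarith
    have hn1 : (n:ℝ) < 1 := by nlinarith
    have l1 : (0:ℤ) < n := by exact_mod_cast hn0
    have l2 : n < 1 := by exact_mod_cast hn1
    omega
  · -- second factor lands in the disk of radius 10R²
    intro z hz
    simp only [Set.mem_setOf_eq] at hz
    show ((2*R)⁻¹ * z.2.1 + 2*R*z.1.2 - (2*Real.pi)⁻¹ * Real.sin (2*Real.pi*(2*R)*z.1.2))^2
        + (2*R*z.2.2)^2 < (10*R^2)^2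
    set A := 2*Real.pi*(2*R)*z.1.2 with hA
    have hS : (Real.sin A)^2 ≤ 1 := Real.sin_sq_le_one A
    have h2pi : (6:ℝ) ≤ 2*Real.pi := by nlinarith [Real.pi_gt_three]
    have hπpos : (0:ℝ) < (2*Real.pi)⁻¹ := by positivity
    have hinv6 : (2*Real.pi)⁻¹ ≤ 1/6 := by
      rw [inv_le_comm₀ (by positivity) (by norm_num)]
      linarith
    have hx2 : z.2.1^2 < R^2 := by
      linarith [sq_nonneg z.1.1, sq_nonneg z.1.2, sq_nonneg z.2.2]
    have hy1 : z.1.2^2 < R^2 := by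
      linarith [sq_nonneg z.1.1, sq_nonneg z.2.1, sq_nonneg z.2.2]
    have hy2 : z.2.2^2 < R^2 := by
      linarith [sq_nonneg z.1.1, sq_nonneg z.1.2, sq_nonneg z.2.1]
    have hipos : (0:ℝ) < ((2*R)⁻¹)^2 := by positivity
    have h4 : ((2*R)⁻¹)^2 * R^2 = 1/4 := by
      field_simp; ring
    have haa : ((2*R)⁻¹ * z.2.1)^2 < 1/4 := by
      nlinarith [mul_lt_mul_of_pos_left hx2 hipos]
    have hbb : (2*R*z.1.2)^2 < 4*R^4 := by
      nlinarith [mul_lt_mul_of_pos_left hy1 (show (0:ℝ) < 4*R^2 by positivity)]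
    have hdd : (2*R*z.2.2)^2 < 4*R^4 := by
      nlinarith [mul_lt_mul_of_pos_left hy2 (show (0:ℝ) < 4*R^2 by positivity)]
    have htt : ((2*Real.pi)⁻¹ * Real.sin A)^2 ≤ 1/36 := by
      nlinarith [sq_nonneg ((2*Real.pi)⁻¹), hS, hinv6, hπpos]
    have h9 : (1:ℝ)/9 ≤ R^2 := by nlinarith
    have hR4 : (1:ℝ)/81 ≤ R^4 := by nlinarith [h9, sq_nonneg (R^2 - 1/9)]
    set a := (2*R)⁻¹ * z.2.1
    set b := 2*R*z.1.2
    set t := (2*Real.pi)⁻¹ * Real.sin A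
    set d := 2*R*z.2.2
    nlinarith [sq_nonneg (a - b), sq_nonneg (a + t), sq_nonneg (b + t), haa, hbb, hdd, htt, hR4]
  · -- injectivity modulo the lattice ℤ² acting on the first factor
    rintro p hp q hq ⟨m, n, h⟩
    simp only [Set.mem_setOf_eq] at hp hq
    simp only [fm, Prod.mk_sub_mk, Prod.mk.injEq] at h
    obtain ⟨⟨h11, h12⟩, h21, h22⟩ := h
    have e22 : p.2.2 = q.2.2 := by
      apply mul_left_cancel₀ h2R; linarith
    have h1' : 2*R*q.1.2 - 2*R*p.1.2 = (m:ℝ) := by linarith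
    have hsin : Real.sin (2*Real.pi*(2*R)*p.1.2) = Real.sin (2*Real.pi*(2*R)*q.1.2) := by
      rw [show 2*Real.pi*(2*R)*p.1.2 = 2*Real.pi*(2*R)*q.1.2 + ((-m : ℤ):ℝ) * (2*Real.pi) by
        push_cast; linear_combination (-(2*Real.pi))*h1']
      exact Real.sin_add_int_mul_two_pi _ _
    rw [hsin] at h21
    have hx2 : p.2.1 - q.2.1 = 2*R*(m:ℝ) := by
      linear_combination (2*R)*h21 + (2*R)*h1' - (p.2.1 - q.2.1)*hkey
    have hp21 : p.2.1^2 < R^2 := by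
      linarith [sq_nonneg p.1.1, sq_nonneg p.1.2, sq_nonneg p.2.2]
    have hq21 : q.2.1^2 < R^2 := by
      linarith [sq_nonneg q.1.1, sq_nonneg q.1.2, sq_nonneg q.2.2]
    obtain ⟨hp21l, hp21r⟩ := fm_abs_aux hR0 hp21
    obtain ⟨hq21l, hq21r⟩ := fm_abs_aux hR0 hq21
    have hm1 : ((m:ℝ)) < 1 := by nlinarith
    have hm2 : (-1:ℝ) < (m:ℝ) := by nlinarith
    have hm0 : m = 0 := by
      have l1 : m < 1 := by exact_mod_cast hm1
      have l2 : -1 < m := by exact_mod_cast hm2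
      omega
    rw [hm0] at h1' hx2
    push_cast at h1' hx2
    have e12 : p.1.2 = q.1.2 := by
      apply mul_left_cancel₀ h2R; linarith
    have e21 : p.2.1 = q.2.1 := by linarith
    rw [e12, e22] at h12
    have hx1 : p.1.1 - q.1.1 = 2*R*(n:ℝ) := by
      linear_combination (2*R)*h12 - (p.1.1 - q.1.1)*hkey
    have hp11 : p.1.1^2 < R^2 := by
      linarith [sq_nonneg p.1.2, sq_nonneg p.2.1, sq_nonneg p.2.2]
    have hq11 : q.1.1^2 < R^2 := by
      linarith [sq_nonneg q.1.2, sq_nonneg q.2.1, sq_nonneg q.2.2]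
    obtain ⟨hp11l, hp11r⟩ := fm_abs_aux hR0 hp11
    obtain ⟨hq11l, hq11r⟩ := fm_abs_aux hR0 hq11
    have hn1 : ((n:ℝ)) < 1 := by nlinarith
    have hn2 : (-1:ℝ) < (n:ℝ) := by nlinarith
    have hn0 : n = 0 := by
      have l1 : n < 1 := by exact_mod_cast hn1
      have l2 : -1 < n := by exact_mod_cast hn2
      omega
    rw [hn0] at hx1
    push_cast at hx1
    have e11 : p.1.1 = q.1.1 := by linarith
    exact Prod.ext (Prod.ext e11 e12) (Prod.ext e21 e22)
end

section
/- Let ψ : ℝ → ℝ be smooth with 0 ≤ ψ ≤ 1, ψ = 1 on [−1/6,1/6], ψ = 0 outside [−1/3,1/3], and |ψ'| ≤ 7. Let W ≤ 1/10. Under the time-2W flow of the Hamiltonian H = ψ(x₁)x₂ on ℝ⁴, any initial point with |y₁| ≤ W and |x₂| ≤ W ends with |y₁| ≤ W + 14W² < 1/2; and any initial point with |x₁| ≤ 1/6 and |y₂| < W ends with y₂ > W. -/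
/-- Bounds along the time-`2W` Hamiltonian flow of `H = ψ(x₁)x₂`: a trajectory
`γ` of the Hamiltonian vector field `(0, ψ'(x₁)x₂, 0, ψ(x₁))` starting with
`|y₁| ≤ W`, `|x₂| ≤ W` ends with `|y₁| ≤ W + 14W² < 1/2`, and starting with
`|x₁| ≤ 1/6`, `|y₂| < W` ends with `y₂ > W`. -/
theorem stmt12 (ψ : ℝ → ℝ) (hψ : ContDiff ℝ (⊤ : ℕ∞) ψ)
    (h01 : ∀ x, 0 ≤ ψ x ∧ ψ x ≤ 1)
    (hone : ∀ x, |x| ≤ 1/6 → ψ x = 1)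
    (hzero : ∀ x, 1/3 < |x| → ψ x = 0)
    (hd : ∀ x, |deriv ψ x| ≤ 7)
    (W : ℝ) (hW : W ≤ 1/10)
    (γ : ℝ → (ℝ × ℝ) × (ℝ × ℝ))
    (hγ : ∀ t, HasDerivAt γ ((0, deriv ψ (γ t).1.1 * (γ t).2.1), (0, ψ (γ t).1.1)) t) :
    ((|(γ 0).1.2| ≤ W ∧ |(γ 0).2.1| ≤ W) →
      |(γ (2*W)).1.2| ≤ W + 14 * W^2 ∧ W + 14 * W^2 < 1/2) ∧
    ((|(γ 0).1.1| ≤ 1/6 ∧ |(γ 0).2.2| < W) → W < (γ (2*W)).2.2) := by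
  -- component derivatives
  have hx1 : ∀ t, HasDerivAt (fun t => (γ t).1.1) 0 t := fun t => (hγ t).fst.fst
  have hx2 : ∀ t, HasDerivAt (fun t => (γ t).2.1) 0 t := fun t => (hγ t).snd.fst
  -- x₁, x₂ constant
  have hx1c : ∀ t, (γ t).1.1 = (γ 0).1.1 := fun t =>
    is_const_of_deriv_eq_zero (fun s => (hx1 s).differentiableAt)
      (fun s => (hx1 s).deriv) t 0
  have hx2c : ∀ t, (γ t).2.1 = (γ 0).2.1 := fun t =>
    is_const_of_deriv_eq_zero (fun s => (hx2 s).differentiableAt)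
      (fun s => (hx2 s).deriv) t 0
  set c : ℝ := deriv ψ (γ 0).1.1 * (γ 0).2.1 with hc
  have hy1 : ∀ t, HasDerivAt (fun t => (γ t).1.2) c t := by
    intro t
    have := (hγ t).fst.snd
    rwa [hx1c t, hx2c t] at this
  have hy2 : ∀ t, HasDerivAt (fun t => (γ t).2.2) (ψ (γ 0).1.1) t := by
    intro t
    have := (hγ t).snd.snd
    rwa [hx1c t] at this
  -- linear solutions
  have lin : ∀ (f : ℝ → ℝ) (k : ℝ), (∀ t, HasDerivAt f k t) → ∀ t, f t = f 0 + k * t := by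
    intro f k hf t
    have hg : ∀ s, HasDerivAt (fun s => f s - k * s) 0 s := by
      intro s
      exact ((hf s).sub ((hasDerivAt_id' s).const_mul k)).congr_deriv (by ring)
    have := is_const_of_deriv_eq_zero (fun s => (hg s).differentiableAt)
      (fun s => (hg s).deriv) t 0
    simp at this
    linarith
  have hy1v : (γ (2*W)).1.2 = (γ 0).1.2 + c * (2*W) := lin _ _ hy1 (2*W)
  have hy2v : (γ (2*W)).2.2 = (γ 0).2.2 + ψ (γ 0).1.1 * (2*W) := lin _ _ hy2 (2*W)
  constructor
  · rintro ⟨h1, h2⟩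
    have hW0 : 0 ≤ W := le_trans (abs_nonneg _) h1
    have hcb : |c| ≤ 7 * W := by
      calc |c| = |deriv ψ (γ 0).1.1| * |(γ 0).2.1| := abs_mul _ _
        _ ≤ 7 * W := by
          apply mul_le_mul (hd _) h2 (abs_nonneg _) (by norm_num)
    constructor
    · rw [hy1v]
      calc |(γ 0).1.2 + c * (2*W)| ≤ |(γ 0).1.2| + |c * (2*W)| := abs_add_le _ _
        _ ≤ W + (7*W) * (2*W) := by
          gcongr
          rw [abs_mul]
          apply mul_le_mul hcb (by rw [abs_of_nonneg (by linarith)]) (abs_nonneg _) (by linarith)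
        _ = W + 14 * W^2 := by ring
    · nlinarith
  · rintro ⟨h1, h2⟩
    have := hone _ h1
    rw [hy2v, this]
    have := abs_lt.1 h2
    linarith
end

section
/- Let n ≥ 2 and suppose for some constant C the following two embedding principles hold for all admissible radii: (a) [Traynor] for R₁ ≤ R₂ and 1 ≤ λ ≤ (R₂/R₁)^{1/2}, B²(R₁)×B²(R₂) symplectically embeds in B²(CλR₁)×B²(CR₂/λ); (b) [Catalyst] for R₁ ≤ R₂ ≤ R₃ and 1 ≤ λ ≤ R₂/R₁, B²(R₁)×B²(R₂)×B²(R₃) symplectically embeds in B²(CR₁)×B²(CR₂/λ)×B²(CλR₃). Then there is a constant C(n) such that whenever R₁ ≤ ⋯ ≤ Rₙ, R'₁ ≤ ⋯ ≤ R'ₙ, R₁ ≤ R'₁ and R₁⋯Rₙ ≤ R'₁⋯R'ₙ, the polydisk with radii Rᵢ symplectically embeds into the polydisk with radii C(n)R'ᵢ. -/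
/-- The standard symplectic pairing on ℝ²ⁿ = (ℝ²)ⁿ, ω = ∑ dxᵢ ∧ dyᵢ. -/
def stdSymp {n : ℕ} (u v : Fin n → ℝ × ℝ) : ℝ :=
  ∑ i, ((u i).1 * (v i).2 - (u i).2 * (v i).1)

/-- The open polydisk `B²(R 1) × ⋯ × B²(R n)` in ℝ²ⁿ = (ℝ²)ⁿ. -/
def polydisk {n : ℕ} (R : Fin n → ℝ) : Set (Fin n → ℝ × ℝ) :=
  {z | ∀ i, (z i).1 ^ 2 + (z i).2 ^ 2 < (R i) ^ 2}

/-- `f` is a symplectic embedding of `U` into `V`: a smooth injective map from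
`U` into `V` whose derivative preserves the standard symplectic form. -/
def IsSympEmb {n : ℕ} (U V : Set (Fin n → ℝ × ℝ))
    (f : (Fin n → ℝ × ℝ) → (Fin n → ℝ × ℝ)) : Prop :=
  ContDiffOn ℝ (⊤ : ℕ∞) f U ∧ Set.InjOn f U ∧ Set.MapsTo f U V ∧
    ∀ z ∈ U, ∀ u v, stdSymp (fderiv ℝ f z u) (fderiv ℝ f z v) = stdSymp u v

/-- `U` symplectically embeds into `V`. -/
def SympEmbeds {n : ℕ} (U V : Set (Fin n → ℝ × ℝ)) : Prop :=
  ∃ f, IsSympEmb U V f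

set_option maxHeartbeats 1000000

open Set Function

section Basics

variable {n : ℕ}

lemma isOpen_polydisk (R : Fin n → ℝ) : IsOpen (polydisk R) := by
  have : polydisk R = ⋂ i, {z : Fin n → ℝ × ℝ | (z i).1 ^ 2 + (z i).2 ^ 2 < (R i) ^ 2} := by
    ext z; simp [polydisk, Set.mem_iInter]
  rw [this]
  refine isOpen_iInter_of_finite fun i => ?_
  have hc : Continuous fun z : Fin n → ℝ × ℝ => (z i).1 ^ 2 + (z i).2 ^ 2 := by fun_prop
  exact isOpen_lt hc continuous_const

lemma polydisk_subset {R S : Fin n → ℝ} (h0 : ∀ i, 0 ≤ R i) (h : ∀ i, R i ≤ S i) :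
    polydisk R ⊆ polydisk S := by
  intro z hz i
  exact lt_of_lt_of_le (hz i) (by have := pow_le_pow_left₀ (h0 i) (h i) 2; exact this)

lemma isSympEmb_id (U : Set (Fin n → ℝ × ℝ)) : IsSympEmb U U id := by
  refine ⟨contDiff_id.contDiffOn, injOn_id U, mapsTo_id U, fun z _ u v => ?_⟩
  rw [fderiv_id]
  simp

lemma SympEmbeds.mono_right {U V W : Set (Fin n → ℝ × ℝ)} (h : SympEmbeds U V) (hVW : V ⊆ W) :
    SympEmbeds U W := by
  obtain ⟨f, h1, h2, h3, h4⟩ := h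
  exact ⟨f, h1, h2, h3.mono_right hVW, h4⟩

lemma sympEmbeds_of_subset {U V : Set (Fin n → ℝ × ℝ)} (h : U ⊆ V) : SympEmbeds U V :=
  SympEmbeds.mono_right ⟨id, isSympEmb_id U⟩ h

lemma sympEmbeds_refl (U : Set (Fin n → ℝ × ℝ)) : SympEmbeds U U := ⟨id, isSympEmb_id U⟩

lemma ContDiffOn.diffAt {f : (Fin n → ℝ × ℝ) → (Fin n → ℝ × ℝ)} {U : Set (Fin n → ℝ × ℝ)}
    (hf : ContDiffOn ℝ (⊤ : ℕ∞) f U) (hU : IsOpen U) {z : Fin n → ℝ × ℝ} (hz : z ∈ U) :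
    DifferentiableAt ℝ f z :=
  (hf.contDiffAt (hU.mem_nhds hz)).differentiableAt (by simp)

lemma SympEmbeds.trans {U V W : Set (Fin n → ℝ × ℝ)} (hU : IsOpen U) (hV : IsOpen V)
    (h1 : SympEmbeds U V) (h2 : SympEmbeds V W) : SympEmbeds U W := by
  obtain ⟨f, hf1, hf2, hf3, hf4⟩ := h1
  obtain ⟨g, hg1, hg2, hg3, hg4⟩ := h2
  refine ⟨g ∘ f, hg1.comp hf1 hf3, fun x hx y hy hxy => hf2 hx hy (hg2 (hf3 hx) (hf3 hy) hxy),
    hg3.comp hf3, fun z hz u v => ?_⟩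
  have hdf : DifferentiableAt ℝ f z := hf1.diffAt hU hz
  have hdg : DifferentiableAt ℝ g (f z) := hg1.diffAt hV (hf3 hz)
  rw [fderiv_comp z hdg hdf]
  simp only [ContinuousLinearMap.coe_comp', Function.comp_apply]
  rw [hg4 (f z) (hf3 hz), hf4 z hz]

end Basics

section Split

open Sum

variable {α β : Type} [Fintype α] [Fintype β] {n : ℕ}

/-- Linear identification of `Fin n → ℝ²` with a product, along `s : α ⊕ β ≃ Fin n`. -/
noncomputable def splitL (s : α ⊕ β ≃ Fin n) :
    (Fin n → ℝ × ℝ) ≃ₗ[ℝ] (α → ℝ × ℝ) × (β → ℝ × ℝ) where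
  toFun z := (fun a => z (s (.inl a)), fun b => z (s (.inr b)))
  invFun p := fun t => Sum.elim p.1 p.2 (s.symm t)
  map_add' _ _ := rfl
  map_smul' _ _ := rfl
  left_inv z := by
    funext t
    show Sum.elim (fun a => z (s (.inl a))) (fun b => z (s (.inr b))) (s.symm t) = z t
    conv_rhs => rw [← s.apply_symm_apply t]
    rcases h : s.symm t with a | b <;> simp
  right_inv p := by
    refine Prod.ext ?_ ?_
    · funext x
      show Sum.elim p.1 p.2 (s.symm (s (.inl x))) = p.1 x
      rw [s.symm_apply_apply]
      simp
    · funext x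
      show Sum.elim p.1 p.2 (s.symm (s (.inr x))) = p.2 x
      rw [s.symm_apply_apply]
      simp

noncomputable def splitCLE (s : α ⊕ β ≃ Fin n) :
    (Fin n → ℝ × ℝ) ≃L[ℝ] (α → ℝ × ℝ) × (β → ℝ × ℝ) :=
  (splitL s).toContinuousLinearEquiv

lemma splitCLE_fst (s : α ⊕ β ≃ Fin n) (z : Fin n → ℝ × ℝ) (a : α) :
    (splitCLE s z).1 a = z (s (.inl a)) := rfl

lemma splitCLE_snd (s : α ⊕ β ≃ Fin n) (z : Fin n → ℝ × ℝ) (b : β) :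
    (splitCLE s z).2 b = z (s (.inr b)) := rfl

lemma splitCLE_symm_inl (s : α ⊕ β ≃ Fin n) (p : (α → ℝ × ℝ) × (β → ℝ × ℝ)) (a : α) :
    (splitCLE s).symm p (s (.inl a)) = p.1 a := by
  show Sum.elim p.1 p.2 (s.symm (s (.inl a))) = p.1 a
  rw [s.symm_apply_apply]
  simp

lemma splitCLE_symm_inr (s : α ⊕ β ≃ Fin n) (p : (α → ℝ × ℝ) × (β → ℝ × ℝ)) (b : β) :
    (splitCLE s).symm p (s (.inr b)) = p.2 b := by
  show Sum.elim p.1 p.2 (s.symm (s (.inr b))) = p.2 b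
  rw [s.symm_apply_apply]
  simp

omit [Fintype α] [Fintype β] in
lemma mem_polydisk_split (s : α ⊕ β ≃ Fin n) {R : Fin n → ℝ} {z : Fin n → ℝ × ℝ} :
    z ∈ polydisk R ↔
      ((∀ a, ((z (s (.inl a))).1 ^ 2 + (z (s (.inl a))).2 ^ 2 < (R (s (.inl a))) ^ 2)) ∧
       (∀ b, ((z (s (.inr b))).1 ^ 2 + (z (s (.inr b))).2 ^ 2 < (R (s (.inr b))) ^ 2)) ) := by
  constructor
  · exact fun h => ⟨fun a => h _, fun b => h _⟩
  · rintro ⟨h1, h2⟩ t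
    have ht := s.apply_symm_apply t
    rcases h : s.symm t with a | b
    · rw [h] at ht; rw [← ht]; exact h1 a
    · rw [h] at ht; rw [← ht]; exact h2 b

lemma stdSymp_split {m : ℕ} (s : Fin m ⊕ β ≃ Fin n) (u v : Fin n → ℝ × ℝ) :
    stdSymp u v = stdSymp (fun a => u (s (.inl a))) (fun a => v (s (.inl a))) +
      ∑ b : β, ((u (s (.inr b))).1 * (v (s (.inr b))).2
        - (u (s (.inr b))).2 * (v (s (.inr b))).1) := by
  rw [stdSymp, ← Equiv.sum_comp s (fun i => (u i).1 * (v i).2 - (u i).2 * (v i).1),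
    Fintype.sum_sum_type]
  rfl

/-- Core transport lemma: a symplectic embedding between `m`-dimensional polydisks applied
on a block of coordinates of an `n`-dimensional polydisk, identity elsewhere. -/
lemma applyAt {m : ℕ} (s : Fin m ⊕ β ≃ Fin n)
    {a a' : Fin m → ℝ} {f : (Fin m → ℝ × ℝ) → (Fin m → ℝ × ℝ)}
    (hf : IsSympEmb (polydisk a) (polydisk a') f)
    (R R' : Fin n → ℝ) (hRa : ∀ j, R (s (.inl j)) = a j) (hR'a : ∀ j, R' (s (.inl j)) = a' j)
    (hfix : ∀ c, R' (s (.inr c)) = R (s (.inr c))) :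
    SympEmbeds (polydisk R) (polydisk R') := by
  obtain ⟨hf1, hf2, hf3, hf4⟩ := hf
  set e := splitCLE s with he
  have hmem1 : ∀ {z : Fin n → ℝ × ℝ}, z ∈ polydisk R → (e z).1 ∈ polydisk a := by
    intro z hz j
    have := ((mem_polydisk_split s (R := R)).1 hz).1 j
    rw [hRa j] at this
    exact this
  refine ⟨fun z => e.symm (f (e z).1, (e z).2), ?_, ?_, ?_, ?_⟩
  · -- smoothness
    have h1 : ContDiffOn ℝ (⊤ : ℕ∞) (fun p : (Fin m → ℝ × ℝ) × (β → ℝ × ℝ) => (f p.1, p.2))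
        (polydisk a ×ˢ Set.univ) := by
      refine ContDiffOn.prodMk ?_ contDiff_snd.contDiffOn
      exact hf1.comp contDiff_fst.contDiffOn (fun p hp => hp.1)
    have h2 : ContDiffOn ℝ (⊤ : ℕ∞) (fun z => (f (e z).1, (e z).2)) (polydisk R) := by
      refine h1.comp (e.contDiff.contDiffOn) ?_
      exact fun z hz => ⟨hmem1 hz, trivial⟩
    exact (e.symm.contDiff.comp_contDiffOn h2)
  · -- injectivity
    intro z hz w hw hzw
    have h := congrArg e hzw
    simp only [ContinuousLinearEquiv.apply_symm_apply] at h
    have h1 := congrArg Prod.fst h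
    have h2 := congrArg Prod.snd h
    simp only at h1 h2
    have : (e z) = (e w) := Prod.ext_iff.mpr ⟨hf2 (hmem1 hz) (hmem1 hw) h1, h2⟩
    exact e.injective this
  · -- maps to
    intro z hz
    have hmz := (mem_polydisk_split s (R := R)).1 hz
    have hmem := hf3 (hmem1 hz)
    rw [mem_polydisk_split s]
    constructor
    · intro j
      show ((e.symm (f (e z).1, (e z).2)) (s (.inl j))).1 ^ 2
        + ((e.symm (f (e z).1, (e z).2)) (s (.inl j))).2 ^ 2 < (R' (s (.inl j))) ^ 2
      rw [splitCLE_symm_inl s _ j, hR'a j]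
      exact hmem j
    · intro b
      show ((e.symm (f (e z).1, (e z).2)) (s (.inr b))).1 ^ 2
        + ((e.symm (f (e z).1, (e z).2)) (s (.inr b))).2 ^ 2 < (R' (s (.inr b))) ^ 2
      rw [splitCLE_symm_inr s _ b, hfix b]
      exact hmz.2 b
  · -- symplectic
    intro z hz u v
    have hz1 : (e z).1 ∈ polydisk a := hmem1 hz
    have hDf : HasFDerivAt f (fderiv ℝ f (e z).1) (e z).1 :=
      ((hf1.diffAt (isOpen_polydisk a) hz1)).hasFDerivAt
    set Df := fderiv ℝ f (e z).1 with hDfdef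
    have hstep : HasFDerivAt (fun p : (Fin m → ℝ × ℝ) × (β → ℝ × ℝ) => (f p.1, p.2))
        ((Df.comp (ContinuousLinearMap.fst ℝ _ _)).prod (ContinuousLinearMap.snd ℝ _ _))
        (e z) := HasFDerivAt.prodMk (hDf.comp (e z) hasFDerivAt_fst) hasFDerivAt_snd
    have hFull : HasFDerivAt (fun z => e.symm (f (e z).1, (e z).2))
        (((e.symm : ((Fin m → ℝ × ℝ) × (β → ℝ × ℝ)) →L[ℝ] (Fin n → ℝ × ℝ)).comp
          (((Df.comp (ContinuousLinearMap.fst ℝ _ _)).prod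
            (ContinuousLinearMap.snd ℝ _ _)))).comp
          (e : (Fin n → ℝ × ℝ) →L[ℝ] ((Fin m → ℝ × ℝ) × (β → ℝ × ℝ))))
        z := by
      have h1 := hstep.comp z (e.hasFDerivAt (x := z))
      have h2 := (e.symm.hasFDerivAt (x := (f (e z).1, (e z).2))).comp z h1
      rw [ContinuousLinearMap.comp_assoc]
      exact h2
    rw [hFull.fderiv]
    set D := (((e.symm : ((Fin m → ℝ × ℝ) × (β → ℝ × ℝ)) →L[ℝ] (Fin n → ℝ × ℝ)).comp
          (((Df.comp (ContinuousLinearMap.fst ℝ _ _)).prod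
            (ContinuousLinearMap.snd ℝ _ _)))).comp
          (e : (Fin n → ℝ × ℝ) →L[ℝ] ((Fin m → ℝ × ℝ) × (β → ℝ × ℝ)))) with hD
    have hDval : ∀ w : Fin n → ℝ × ℝ,
        D w = e.symm (Df (fun a => w (s (.inl a))), fun b => w (s (.inr b))) := by
      intro w
      simp only [hD, ContinuousLinearMap.coe_comp', Function.comp_apply,
        ContinuousLinearEquiv.coe_coe, ContinuousLinearMap.prod_apply,
        ContinuousLinearMap.coe_fst', ContinuousLinearMap.coe_snd']
      rfl
    have hinl : ∀ w (j : Fin m), D w (s (.inl j)) = Df (fun a => w (s (.inl a))) j := by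
      intro w j; rw [hDval w]; exact splitCLE_symm_inl s _ j
    have hinr : ∀ w (b : β), D w (s (.inr b)) = w (s (.inr b)) := by
      intro w b; rw [hDval w]; exact splitCLE_symm_inr s _ b
    rw [stdSymp_split s (D u) (D v), stdSymp_split s u v]
    congr 1
    · have hu : (fun a => D u (s (.inl a))) = Df (fun a => u (s (.inl a))) := by
        funext j; exact hinl u j
      have hv : (fun a => D v (s (.inl a))) = Df (fun a => v (s (.inl a))) := by
        funext j; exact hinl v j
      rw [hu, hv]
      exact hf4 (e z).1 hz1 _ _
    · refine Finset.sum_congr rfl fun b _ => ?_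
      rw [hinr u b, hinr v b]

end Split
section ApplyAtInj

open Sum Function

variable {m n : ℕ}

lemma applyAtInj (g : Fin m → Fin n) (hg : Function.Injective g)
    {a a' : Fin m → ℝ} (hf : SympEmbeds (polydisk a) (polydisk a'))
    (R R' : Fin n → ℝ) (hRa : ∀ j, R (g j) = a j) (hR'a : ∀ j, R' (g j) = a' j)
    (hfix : ∀ t, t ∉ Set.range g → R' t = R t) :
    SympEmbeds (polydisk R) (polydisk R') := by
  classical
  obtain ⟨f, hf⟩ := hf
  let s : Fin m ⊕ {x : Fin n // x ∉ Set.range g} ≃ Fin n :=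
    (Equiv.sumCongr (Equiv.ofInjective g hg) (Equiv.refl _)).trans
      (Equiv.sumCompl (fun x => x ∈ Set.range g))
  have hsl : ∀ j, s (.inl j) = g j := fun j => rfl
  have hsr : ∀ c : {x : Fin n // x ∉ Set.range g}, s (.inr c) = c.1 := fun c => rfl
  refine applyAt s hf R R' (fun j => by rw [hsl j]; exact hRa j)
    (fun j => by rw [hsl j]; exact hR'a j)
    (fun c => by rw [hsr c]; exact hfix c.1 c.2)

/-- Relabeling coordinates by a permutation is a symplectic embedding. -/
lemma relabel (σ : Equiv.Perm (Fin n)) (R : Fin n → ℝ) :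
    SympEmbeds (polydisk (R ∘ σ)) (polydisk R) := by
  let L : (Fin n → ℝ × ℝ) ≃ₗ[ℝ] (Fin n → ℝ × ℝ) :=
    { toFun := fun z => fun t => z (σ.symm t)
      invFun := fun z => fun t => z (σ t)
      map_add' := fun _ _ => rfl
      map_smul' := fun _ _ => rfl
      left_inv := fun z => by funext t; simp
      right_inv := fun z => by funext t; simp }
  let e : (Fin n → ℝ × ℝ) ≃L[ℝ] (Fin n → ℝ × ℝ) := L.toContinuousLinearEquiv
  have he : ∀ z t, e z t = z (σ.symm t) := fun z t => rfl
  refine ⟨e, e.contDiff.contDiffOn, e.injective.injOn, ?_, ?_⟩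
  · intro z hz t
    rw [he]
    have := hz (σ.symm t)
    simpa using this
  · intro z _ u v
    rw [(e.hasFDerivAt (x := z)).fderiv]
    show stdSymp (e u) (e v) = stdSymp u v
    unfold stdSymp
    rw [← Equiv.sum_comp σ.symm (fun i => (u i).1 * (v i).2 - (u i).2 * (v i).1)]
    rfl

end ApplyAtInj
section Combo

variable {k : ℕ}

lemma pd_trans {A B D : Fin k → ℝ} (h1 : SympEmbeds (polydisk A) (polydisk B))
    (h2 : SympEmbeds (polydisk B) (polydisk D)) : SympEmbeds (polydisk A) (polydisk D) :=
  SympEmbeds.trans (isOpen_polydisk _) (isOpen_polydisk _) h1 h2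

lemma pd_mono {A B D : Fin k → ℝ} (h1 : SympEmbeds (polydisk A) (polydisk B))
    (h0 : ∀ i, 0 ≤ B i) (h : ∀ i, B i ≤ D i) : SympEmbeds (polydisk A) (polydisk D) :=
  h1.mono_right (polydisk_subset h0 h)


lemma le_Csq_mul {C r : ℝ} (hC : 1 ≤ C) (hr : 0 ≤ r) : C * r ≤ C ^ 2 * r := by
  nlinarith [mul_nonneg (mul_nonneg (lt_of_lt_of_le one_pos hC).le hr) (sub_nonneg.mpr hC)]

lemma comboPair (C : ℝ) (hC : 1 ≤ C)
    (hT : ∀ R₁ R₂ lam : ℝ, 0 < R₁ → R₁ ≤ R₂ → 1 ≤ lam → lam ^ 2 ≤ R₂ / R₁ →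
      SympEmbeds (polydisk ![R₁, R₂]) (polydisk ![C * (lam * R₁), C * (R₂ / lam)]))
    (hK : ∀ R₁ R₂ R₃ lam : ℝ, 0 < R₁ → R₁ ≤ R₂ → R₂ ≤ R₃ → 1 ≤ lam → lam ≤ R₂ / R₁ →
      SympEmbeds (polydisk ![R₁, R₂, R₃])
        (polydisk ![C * R₁, C * (R₂ / lam), C * (lam * R₃)]))
    {r p q u w : ℝ} (hr : 0 < r) (hp : r ≤ p) (hq : r ≤ q) (hu : r ≤ u) (hw : r ≤ w)
    (hpq : p * q = u * w) :
    SympEmbeds (polydisk ![r, p, q]) (polydisk ![C ^ 2 * r, C ^ 2 * u, C ^ 2 * w]) := by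
  have hp0 : 0 < p := lt_of_lt_of_le hr hp
  have hq0 : 0 < q := lt_of_lt_of_le hr hq
  have hu0 : 0 < u := lt_of_lt_of_le hr hu
  have hw0 : 0 < w := lt_of_lt_of_le hr hw
  have hC0 : 0 < C := lt_of_lt_of_le one_pos hC
  set g := Real.sqrt (p * q) with hgdef
  have hg0 : 0 < g := Real.sqrt_pos.mpr (by positivity)
  have hg2 : g ^ 2 = p * q := Real.sq_sqrt (by positivity)
  have hrg : r ≤ g := by
    refine le_of_pow_le_pow_left₀ two_ne_zero hg0.le ?_
    rw [hg2]; nlinarith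
  set m' := min u w with hm'def
  set M := max u w with hMdef
  have hm0 : 0 < m' := lt_min hu0 hw0
  have hrm : r ≤ m' := le_min hu hw
  have hmM : m' ≤ M := min_le_max
  have hg2' : g ^ 2 = m' * M := by rw [hg2, hpq, min_mul_max]
  have hmg : m' ≤ g := by
    refine le_of_pow_le_pow_left₀ two_ne_zero hg0.le ?_
    rw [hg2']; nlinarith
  -- Step 1 : compress (p,q) to (C*g, C*g)
  have E1 : SympEmbeds (polydisk ![r, p, q]) (polydisk ![r, C * g, C * g]) := by
    rcases le_total p q with hle | hle
    · have hpg : p ≤ g := by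
        refine le_of_pow_le_pow_left₀ two_ne_zero hg0.le ?_
        rw [hg2]; nlinarith
      have hcond : (g / p) ^ 2 ≤ q / p := by
        rw [div_pow, hg2]
        rw [div_le_div_iff₀ (by positivity) hp0]
        ring_nf
        nlinarith
      have h1 := hT p q (g / p) hp0 hle ((one_le_div hp0).mpr hpg) hcond
      have e1 : C * (g / p * p) = C * g := by field_simp
      have e2 : C * (q / (g / p)) = C * g := by
        rw [div_div_eq_mul_div]
        rw [show q * p / g = g from by rw [div_eq_iff hg0.ne']; nlinarith]
      rw [e1, e2] at h1
      exact applyAtInj ![1, 2] (by decide) h1 ![r, p, q] ![r, C * g, C * g]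
        (by intro j; fin_cases j <;> rfl) (by intro j; fin_cases j <;> rfl)
        (by intro t ht; fin_cases t
            · rfl
            · exact absurd ⟨0, rfl⟩ ht
            · exact absurd ⟨1, rfl⟩ ht)
    · have hqg : q ≤ g := by
        refine le_of_pow_le_pow_left₀ two_ne_zero hg0.le ?_
        rw [hg2]; nlinarith
      have hcond : (g / q) ^ 2 ≤ p / q := by
        rw [div_pow, hg2]
        rw [div_le_div_iff₀ (by positivity) hq0]
        ring_nf
        nlinarith
      have h1 := hT q p (g / q) hq0 hle ((one_le_div hq0).mpr hqg) hcond
      have e1 : C * (g / q * q) = C * g := by field_simp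
      have e2 : C * (p / (g / q)) = C * g := by
        rw [div_div_eq_mul_div]
        rw [show p * q / g = g from by rw [div_eq_iff hg0.ne']; nlinarith]
      rw [e1, e2] at h1
      exact applyAtInj ![2, 1] (by decide) h1 ![r, p, q] ![r, C * g, C * g]
        (by intro j; fin_cases j <;> rfl) (by intro j; fin_cases j <;> rfl)
        (by intro t ht; fin_cases t
            · rfl
            · exact absurd ⟨1, rfl⟩ ht
            · exact absurd ⟨0, rfl⟩ ht)
  -- Step 2 : spread (C*g, C*g) to (C^2*m', C^2*M) using the catalyst
  have E2 : SympEmbeds (polydisk ![r, C * g, C * g])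
      (polydisk ![C * r, C ^ 2 * m', C ^ 2 * M]) := by
    have hrCg : r ≤ C * g := le_trans hrg (le_mul_of_one_le_left hg0.le hC)
    have hlam1 : (1:ℝ) ≤ g / m' := (one_le_div hm0).mpr hmg
    have hlam2 : g / m' ≤ C * g / r := by
      rw [div_le_div_iff₀ hm0 hr]
      nlinarith [mul_le_mul_of_nonneg_left hrm hg0.le,
        mul_nonneg (mul_nonneg (sub_nonneg.mpr hC) hg0.le) hm0.le]
    have h2 := hK r (C * g) (C * g) (g / m') hr hrCg le_rfl hlam1 hlam2
    have eqA : C * (C * g / (g / m')) = C ^ 2 * m' := by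
      rw [div_div_eq_mul_div]
      rw [show C * g * m' / g = C * m' from by rw [div_eq_iff hg0.ne']; ring]
      ring
    have eqB : C * (g / m' * (C * g)) = C ^ 2 * M := by
      rw [show g / m' * (C * g) = C * M from by
        rw [div_mul_eq_mul_div, div_eq_iff hm0.ne']; nlinarith]
      ring
    rw [eqA, eqB] at h2
    exact h2
  -- Step 3 : reorder and pad
  have E3 : SympEmbeds (polydisk ![C * r, C ^ 2 * m', C ^ 2 * M])
      (polydisk ![C ^ 2 * r, C ^ 2 * u, C ^ 2 * w]) := by
    rcases le_total u w with hle | hle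
    · have h1 : m' = u := min_eq_left hle
      have h2 : M = w := max_eq_right hle
      rw [h1, h2]
      refine sympEmbeds_of_subset (polydisk_subset ?_ ?_)
      · intro i; fin_cases i
        · show (0:ℝ) ≤ C * r; positivity
        · show (0:ℝ) ≤ C ^ 2 * u; positivity
        · show (0:ℝ) ≤ C ^ 2 * w; positivity
      · intro i; fin_cases i
        · show C * r ≤ C ^ 2 * r; exact le_Csq_mul hC hr.le
        · exact le_refl _
        · exact le_refl _
    · have h1 : m' = w := min_eq_right hle
      have h2 : M = u := max_eq_left hle
      rw [h1, h2]
      have hsub : SympEmbeds (polydisk ![C * r, C ^ 2 * w, C ^ 2 * u])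
          (polydisk ![C ^ 2 * r, C ^ 2 * w, C ^ 2 * u]) := by
        refine sympEmbeds_of_subset (polydisk_subset ?_ ?_)
        · intro i; fin_cases i
          · show (0:ℝ) ≤ C * r; positivity
          · show (0:ℝ) ≤ C ^ 2 * w; positivity
          · show (0:ℝ) ≤ C ^ 2 * u; positivity
        · intro i; fin_cases i
          · show C * r ≤ C ^ 2 * r; exact le_Csq_mul hC hr.le
          · exact le_refl _
          · exact le_refl _
      have hperm : SympEmbeds (polydisk ![C ^ 2 * r, C ^ 2 * w, C ^ 2 * u])
          (polydisk ![C ^ 2 * r, C ^ 2 * u, C ^ 2 * w]) := by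
        have := relabel (Equiv.swap 1 2) ![C ^ 2 * r, C ^ 2 * u, C ^ 2 * w]
        have heq : (![C ^ 2 * r, C ^ 2 * u, C ^ 2 * w]) ∘ (Equiv.swap (1:Fin 3) 2) =
            ![C ^ 2 * r, C ^ 2 * w, C ^ 2 * u] := by
          funext i
          fin_cases i <;> simp [Equiv.swap_apply_def] <;> rfl
        rwa [heq] at this
      exact pd_trans hsub hperm
  exact pd_trans (pd_trans E1 E2) E3

end Combo
section Reach

lemma vec3_inj {γ : Type*} {a b d : γ} (h1 : a ≠ b) (h2 : a ≠ d) (h3 : b ≠ d) :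
    Function.Injective ![a, b, d] := by
  intro x y h
  fin_cases x <;> fin_cases y <;>
    first
      | rfl
      | exact absurd h h1 | exact absurd h h2 | exact absurd h h3
      | exact absurd h.symm h1 | exact absurd h.symm h2 | exact absurd h.symm h3

lemma mem_range_vec3 {γ : Type*} (a b d x : γ) :
    x ∈ Set.range ![a, b, d] ↔ x = a ∨ x = b ∨ x = d := by
  constructor
  · rintro ⟨j, rfl⟩
    fin_cases j
    exacts [Or.inl rfl, Or.inr (Or.inl rfl), Or.inr (Or.inr rfl)]
  · rintro (rfl | rfl | rfl)
    exacts [⟨0, rfl⟩, ⟨1, rfl⟩, ⟨2, rfl⟩]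

lemma vec2_inj {γ : Type*} {a b : γ} (h1 : a ≠ b) : Function.Injective ![a, b] := by
  intro x y h
  fin_cases x <;> fin_cases y <;>
    first | rfl | exact absurd h h1 | exact absurd h.symm h1

lemma mem_range_vec2 {γ : Type*} (a b x : γ) :
    x ∈ Set.range ![a, b] ↔ x = a ∨ x = b := by
  constructor
  · rintro ⟨j, rfl⟩
    fin_cases j
    exacts [Or.inl rfl, Or.inr rfl]
  · rintro (rfl | rfl)
    exacts [⟨0, rfl⟩, ⟨1, rfl⟩]

/-- The redistribution lemma: inside a polydisk, with a "catalyst" coordinate `c`,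
the radii on a set `F` of coordinates (all at least the catalyst radius) can be
arbitrarily redistributed (preserving their product, staying above the catalyst
radius), at the cost of the constant `C ^ (2k)`. -/
lemma reach {n : ℕ} (C : ℝ) (hC : 1 ≤ C)
    (hT : ∀ R₁ R₂ lam : ℝ, 0 < R₁ → R₁ ≤ R₂ → 1 ≤ lam → lam ^ 2 ≤ R₂ / R₁ →
      SympEmbeds (polydisk ![R₁, R₂]) (polydisk ![C * (lam * R₁), C * (R₂ / lam)]))
    (hK : ∀ R₁ R₂ R₃ lam : ℝ, 0 < R₁ → R₁ ≤ R₂ → R₂ ≤ R₃ → 1 ≤ lam → lam ≤ R₂ / R₁ →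
      SympEmbeds (polydisk ![R₁, R₂, R₃])
        (polydisk ![C * R₁, C * (R₂ / lam), C * (lam * R₃)]))
    (c : Fin n) :
    ∀ (k : ℕ) (F : Finset (Fin n)), F.card = k → c ∉ F →
      ∀ (R V : Fin n → ℝ), (∀ i, 0 < R i) → (∀ i ∈ F, R c ≤ R i) → (∀ i ∈ F, R c ≤ V i) →
      (∏ i ∈ F, R i) = (∏ i ∈ F, V i) →
      SympEmbeds (polydisk R) (polydisk fun i => C ^ (2 * k) * (if i ∈ F then V i else R i)) := by
  have hC0 : (0:ℝ) < C := lt_of_lt_of_le one_pos hC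
  intro k
  induction k with
  | zero =>
    intro F hcard hcF R V hpos hge hVge hprod
    have hF : F = ∅ := Finset.card_eq_zero.mp hcard
    subst hF
    refine sympEmbeds_of_subset (polydisk_subset (fun i => (hpos i).le) fun i => ?_)
    simp
  | succ k ih =>
    intro F hcard hcF R V hpos hge hVge hprod
    have hFne : F.Nonempty := Finset.card_pos.mp (by omega)
    have hC2 : (1:ℝ) ≤ C ^ 2 := one_le_pow₀ hC
    rcases Nat.eq_zero_or_pos k with hk0 | hkpos
    · -- singleton case
      subst hk0
      obtain ⟨x, hx⟩ := Finset.card_eq_one.mp hcard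
      subst hx
      rw [Finset.prod_singleton, Finset.prod_singleton] at hprod
      refine sympEmbeds_of_subset (polydisk_subset (fun i => (hpos i).le) fun i => ?_)
      by_cases hix : i = x
      · subst hix
        simp only [Finset.mem_singleton, if_pos rfl]
        rw [← hprod]
        exact le_mul_of_one_le_left (hpos i).le (one_le_pow₀ hC)
      · simp only [Finset.mem_singleton, if_neg hix]
        exact le_mul_of_one_le_left (hpos i).le (one_le_pow₀ hC)
    · -- main inductive step
      obtain ⟨t, htF, htmin⟩ := Finset.exists_min_image F V hFne
      have hF'card : (F.erase t).card = k := by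
        rw [Finset.card_erase_of_mem htF, hcard]
        omega
      have hF'ne : (F.erase t).Nonempty := Finset.card_pos.mp (by omega)
      obtain ⟨uu, huF', humax⟩ := Finset.exists_max_image (F.erase t) R hF'ne
      have hut : uu ≠ t := (Finset.mem_erase.mp huF').1
      have huF : uu ∈ F := (Finset.mem_erase.mp huF').2
      have hct : c ≠ t := fun h => hcF (h ▸ htF)
      have hcu : c ≠ uu := fun h => hcF (h ▸ huF)
      have hRc0 : 0 < R c := hpos c
      have hVt0 : 0 < V t := lt_of_lt_of_le hRc0 (hVge t htF)
      -- V t is at most max (R t) (R uu)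
      have hmax_all : ∀ i ∈ F, R i ≤ max (R t) (R uu) := by
        intro i hi
        rcases eq_or_ne i t with rfl | hne
        · exact le_max_left _ _
        · exact le_trans (humax i (Finset.mem_erase.mpr ⟨hne, hi⟩)) (le_max_right _ _)
      have hVt_le : V t ≤ max (R t) (R uu) := by
        have h1 : (V t) ^ (k + 1) ≤ ∏ i ∈ F, V i := by
          calc (V t) ^ (k + 1) = ∏ _i ∈ F, V t := by rw [Finset.prod_const, hcard]
            _ ≤ ∏ i ∈ F, V i := Finset.prod_le_prod (fun i _ => hVt0.le) htmin
        have h2 : (∏ i ∈ F, R i) ≤ (max (R t) (R uu)) ^ (k + 1) := by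
          calc (∏ i ∈ F, R i) ≤ ∏ _i ∈ F, max (R t) (R uu) :=
                Finset.prod_le_prod (fun i _ => (hpos i).le) hmax_all
            _ = (max (R t) (R uu)) ^ (k + 1) := by rw [Finset.prod_const, hcard]
        refine le_of_pow_le_pow_left₀ (n := k + 1) (by omega) ?_ ?_
        · exact le_trans (hpos t).le (le_max_left _ _)
        · rw [hprod] at h2
          linarith
      set P := R t * R uu / V t with hPdef
      have hP0 : 0 < P := by
        apply div_pos (mul_pos (hpos t) (hpos uu)) hVt0
      have hrP : R c ≤ P := by
        rw [hPdef, le_div_iff₀ hVt0]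
        rcases max_cases (R t) (R uu) with ⟨hm, _⟩ | ⟨hm, _⟩
        · -- max = R t, so V t ≤ R t
          rw [hm] at hVt_le
          calc R c * V t ≤ R uu * R t :=
                mul_le_mul (hge uu huF) hVt_le hVt0.le (hpos uu).le
            _ = R t * R uu := mul_comm _ _
        · rw [hm] at hVt_le
          exact mul_le_mul (hge t htF) hVt_le hVt0.le (hpos t).le
      have hprodpair : R t * R uu = V t * P := by
        rw [hPdef]; field_simp
      -- the combo embedding on coordinates (c, t, uu)
      have E1 := comboPair C hC hT hK hRc0 (hge t htF) (hge uu huF) (hVge t htF) hrP hprodpair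
      set R2 : Fin n → ℝ := fun i =>
        if i = c then C ^ 2 * R c else if i = t then C ^ 2 * V t
          else if i = uu then C ^ 2 * P else R i with hR2def
      have E2 : SympEmbeds (polydisk R) (polydisk R2) := by
        refine applyAtInj ![c, t, uu] (vec3_inj hct hcu (Ne.symm hut)) E1 R R2 ?_ ?_ ?_
        · intro j; fin_cases j <;> rfl
        · intro j; fin_cases j
          · show R2 c = C ^ 2 * R c
            rw [hR2def]; simp
          · show R2 t = C ^ 2 * V t
            rw [hR2def]; simp [Ne.symm hct]
          · show R2 uu = C ^ 2 * P
            rw [hR2def]; simp [Ne.symm hcu, hut]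
        · intro x hx
          rw [mem_range_vec3] at hx
          push_neg at hx
          rw [hR2def]
          simp [hx.1, hx.2.1, hx.2.2]
      set Q : Fin n → ℝ := fun i => if i = t then V t else if i = uu then P else R i with hQdef
      have hQpos : ∀ i, 0 < Q i := by
        intro i
        rw [hQdef]
        dsimp only
        split
        · exact hVt0
        · split
          · exact hP0
          · exact hpos i
      have E3 : SympEmbeds (polydisk R2) (polydisk fun i => C ^ 2 * Q i) := by
        refine sympEmbeds_of_subset (polydisk_subset ?_ ?_)
        · intro i
          rw [hR2def]
          dsimp only
          split
          · positivity
          · split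
            · positivity
            · split
              · positivity
              · exact (hpos i).le
        · intro i
          rw [hR2def, hQdef]
          dsimp only
          rcases eq_or_ne i c with rfl | hic
          · rw [if_pos rfl, if_neg hct, if_neg hcu]
          · rw [if_neg hic]
            rcases eq_or_ne i t with rfl | hit
            · rw [if_pos rfl, if_pos rfl]
            · rw [if_neg hit, if_neg hit]
              rcases eq_or_ne i uu with rfl | hiu
              · rw [if_pos rfl, if_pos rfl]
              · rw [if_neg hiu, if_neg hiu]
                exact le_mul_of_one_le_left (hpos i).le hC2
      -- the product identity for the remaining instance
      have hprodQ : (∏ i ∈ F.erase t, Q i) = ∏ i ∈ F.erase t, V i := by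
        set X := ∏ i ∈ (F.erase t).erase uu, R i with hXdef
        have h1 : (∏ i ∈ F.erase t, Q i) = P * X := by
          rw [← Finset.mul_prod_erase _ Q huF']
          congr 1
          · rw [hQdef]; simp [hut]
          · refine Finset.prod_congr rfl fun i hi => ?_
            have hiu : i ≠ uu := (Finset.mem_erase.mp hi).1
            have hit : i ≠ t := (Finset.mem_erase.mp (Finset.mem_erase.mp hi).2).1
            rw [hQdef]
            simp [hiu, hit]
        have h2 : R uu * X = ∏ i ∈ F.erase t, R i := Finset.mul_prod_erase _ R huF'
        have h3 : R t * ∏ i ∈ F.erase t, R i = ∏ i ∈ F, R i := Finset.mul_prod_erase F R htF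
        have h4 : V t * ∏ i ∈ F.erase t, V i = ∏ i ∈ F, V i := Finset.mul_prod_erase F V htF
        have hkey : V t * (P * X) = V t * ∏ i ∈ F.erase t, V i := by
          have hPX : V t * (P * X) = R t * (R uu * X) := by
            rw [hPdef]; field_simp
          rw [hPX, h2, h3, hprod, ← h4]
        rw [h1]
        exact mul_left_cancel₀ hVt0.ne' hkey
      -- apply the induction hypothesis
      have E4 := ih (F.erase t) hF'card (fun h => hcF (Finset.mem_erase.mp h).2)
        (fun i => C ^ 2 * Q i) (fun i => C ^ 2 * V i)
        (fun i => by exact mul_pos (pow_pos hC0 2) (hQpos i))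
        (fun i hi => by
          have : Q c ≤ Q i := by
            rw [hQdef]
            dsimp only
            rw [if_neg hct, if_neg hcu]
            have hit : i ≠ t := (Finset.mem_erase.mp hi).1
            rw [if_neg hit]
            rcases eq_or_ne i uu with rfl | hiu
            · rw [if_pos rfl]; exact hrP
            · rw [if_neg hiu]; exact hge i (Finset.mem_erase.mp hi).2
          exact mul_le_mul_of_nonneg_left this (by positivity))
        (fun i hi => by
          have hQc : Q c = R c := by rw [hQdef]; simp [hct, hcu]
          rw [hQc]
          exact mul_le_mul_of_nonneg_left (hVge i (Finset.mem_erase.mp hi).2) (by positivity))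
        (by
          simp only [Finset.prod_mul_distrib, hprodQ])
      -- identify the final radii
      have hfinal : (fun i => C ^ (2 * k) * (if i ∈ F.erase t then C ^ 2 * V i
          else C ^ 2 * Q i)) = fun i => C ^ (2 * (k + 1)) * (if i ∈ F then V i else R i) := by
        have hpow : C ^ (2 * (k + 1)) = C ^ (2 * k) * C ^ 2 := by
          rw [show 2 * (k + 1) = 2 * k + 2 from by omega, pow_add]
        funext i
        by_cases hiF' : i ∈ F.erase t
        · rw [if_pos hiF', if_pos (Finset.mem_erase.mp hiF').2, hpow]; ring
        · rw [if_neg hiF']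
          rcases eq_or_ne i t with rfl | hit
          · rw [if_pos htF, hpow]
            have : Q i = V i := by rw [hQdef]; simp
            rw [this]; ring
          · have hiF : i ∉ F := fun h => hiF' (Finset.mem_erase.mpr ⟨hit, h⟩)
            rw [if_neg hiF]
            have : Q i = R i := by
              rw [hQdef]
              have hiu : i ≠ uu := fun h => hiF (h ▸ huF)
              simp [hit, hiu]
            rw [this, hpow]; ring
      rw [hfinal] at E4
      exact pd_trans (pd_trans E2 E3) E4

end Reach
section Waterfill

lemma waterfill {ι : Type*} [DecidableEq ι] {T : ℝ} (hT : 0 < T) :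
    ∀ (F : Finset ι) (Bnd : ι → ℝ) (P : ℝ), (∀ i ∈ F, T ≤ Bnd i) → T ^ F.card ≤ P →
      P ≤ ∏ i ∈ F, Bnd i →
      ∃ v : ι → ℝ, (∀ i ∈ F, T ≤ v i ∧ v i ≤ Bnd i) ∧ (∏ i ∈ F, v i) = P := by
  intro F
  induction F using Finset.induction_on with
  | empty =>
    intro Bnd P _ h1 h2
    simp only [Finset.card_empty, pow_zero] at h1
    simp only [Finset.prod_empty] at h2 ⊢
    exact ⟨fun _ => 1, by simp, le_antisymm h1 h2⟩
  | @insert a F' ha ih =>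
    intro Bnd P hBnd h1 h2
    have hBa : T ≤ Bnd a := hBnd a (Finset.mem_insert_self a F')
    have hrest0 : 0 < ∏ i ∈ F', Bnd i :=
      Finset.prod_pos fun i hi => lt_of_lt_of_le hT (hBnd i (Finset.mem_insert_of_mem hi))
    set rest := ∏ i ∈ F', Bnd i with hrestdef
    have hTrest : T ^ F'.card ≤ rest := by
      calc T ^ F'.card = ∏ _i ∈ F', T := by rw [Finset.prod_const]
        _ ≤ rest := Finset.prod_le_prod (fun _ _ => hT.le)
            (fun i hi => hBnd i (Finset.mem_insert_of_mem hi))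
    have hP0 : 0 < P := lt_of_lt_of_le (pow_pos hT _) h1
    rw [Finset.card_insert_of_notMem ha] at h1
    rw [Finset.prod_insert ha] at h2
    set va := min (Bnd a) (max T (P / rest)) with hvadef
    have hva_lb : T ≤ va := le_min hBa (le_max_left _ _)
    have hva_ub : va ≤ Bnd a := min_le_left _ _
    have hva0 : 0 < va := lt_of_lt_of_le hT hva_lb
    have hva_le : va ≤ P / T ^ F'.card := by
      refine le_trans (min_le_right _ _) (max_le ?_ ?_)
      · rw [le_div_iff₀ (pow_pos hT _)]
        calc T * T ^ F'.card = T ^ (F'.card + 1) := (pow_succ' T _).symm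
          _ ≤ P := h1
      · exact div_le_div_of_nonneg_left hP0.le (pow_pos hT _) hTrest
    have cond1 : T ^ F'.card ≤ P / va := by
      rw [le_div_iff₀ hva0]
      calc T ^ F'.card * va = va * T ^ F'.card := mul_comm _ _
        _ ≤ P := (le_div_iff₀ (pow_pos hT _)).mp hva_le
    have cond2 : P / va ≤ rest := by
      rw [div_le_iff₀ hva0]
      rcases min_cases (Bnd a) (max T (P / rest)) with ⟨hm, hle⟩ | ⟨hm, _⟩
      · rw [← hvadef] at hm
        calc P ≤ Bnd a * rest := h2
          _ = rest * Bnd a := mul_comm _ _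
          _ = rest * va := by rw [hm]
      · rw [← hvadef] at hm
        have h5 : P / rest ≤ va := by rw [hm]; exact le_max_right _ _
        have := (div_le_iff₀ hrest0).mp h5
        linarith
    obtain ⟨v, hv, hvp⟩ := ih Bnd (P / va)
      (fun i hi => hBnd i (Finset.mem_insert_of_mem hi)) cond1 cond2
    refine ⟨Function.update v a va, ?_, ?_⟩
    · intro i hi
      rcases Finset.mem_insert.mp hi with rfl | hi'
      · rw [Function.update_self]
        exact ⟨hva_lb, hva_ub⟩
      · rw [Function.update_of_ne (ne_of_mem_of_not_mem hi' ha)]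
        exact hv i hi'
    · rw [Finset.prod_insert ha, Function.update_self]
      have : (∏ i ∈ F', Function.update v a va i) = ∏ i ∈ F', v i :=
        Finset.prod_congr rfl fun i hi => Function.update_of_ne (ne_of_mem_of_not_mem hi ha) _ _
      rw [this, hvp, mul_comm, div_mul_cancel₀ _ hva0.ne']

end Waterfill

/-- Theorem 1 from Traynor's embedding and the catalyst embedding: assuming
(a) Traynor's two-dimensional-factor trading and (b) the catalyst embedding,
there is a constant `C'` (depending on `n`) such that any `2n`-dimensional
polydisk with radii `R₁ ≤ ⋯ ≤ Rₙ` embeds into the `C'`-rescaling of any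
polydisk with radii `R'₁ ≤ ⋯ ≤ R'ₙ`, provided `R₁ ≤ R'₁` and
`R₁⋯Rₙ ≤ R'₁⋯R'ₙ`. -/
theorem stmt15 (n : ℕ) (hn : 2 ≤ n) (C : ℝ) (hC : 0 < C)
    (hTraynor : ∀ R₁ R₂ lam : ℝ, 0 < R₁ → R₁ ≤ R₂ → 1 ≤ lam → lam ^ 2 ≤ R₂ / R₁ →
      SympEmbeds (polydisk ![R₁, R₂]) (polydisk ![C * (lam * R₁), C * (R₂ / lam)]))
    (hCatalyst : ∀ R₁ R₂ R₃ lam : ℝ, 0 < R₁ → R₁ ≤ R₂ → R₂ ≤ R₃ → 1 ≤ lam →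
      lam ≤ R₂ / R₁ →
      SympEmbeds (polydisk ![R₁, R₂, R₃])
        (polydisk ![C * R₁, C * (R₂ / lam), C * (lam * R₃)])) :
    ∃ C' : ℝ, 0 < C' ∧ ∀ R R' : Fin n → ℝ,
      (∀ i, 0 < R i) → (∀ i, 0 < R' i) →
      (∀ i j : Fin n, i ≤ j → R i ≤ R j) → (∀ i j : Fin n, i ≤ j → R' i ≤ R' j) →
      R ⟨0, by omega⟩ ≤ R' ⟨0, by omega⟩ → (∏ i, R i) ≤ ∏ i, R' i →
      SympEmbeds (polydisk R) (polydisk fun i => C' * R' i) := by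
  -- upgrade the constant to C₁ := max C 1 ≥ 1
  set C₁ := max C 1 with hC₁def
  have hC₁ : 1 ≤ C₁ := le_max_right _ _
  have hC₁0 : 0 < C₁ := lt_of_lt_of_le one_pos hC₁
  have hCC₁ : C ≤ C₁ := le_max_left _ _
  have hT : ∀ R₁ R₂ lam : ℝ, 0 < R₁ → R₁ ≤ R₂ → 1 ≤ lam → lam ^ 2 ≤ R₂ / R₁ →
      SympEmbeds (polydisk ![R₁, R₂]) (polydisk ![C₁ * (lam * R₁), C₁ * (R₂ / lam)]) := by
    intro R₁ R₂ lam h1 h2 h3 h4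
    have hR₂ : 0 < R₂ := lt_of_lt_of_le h1 h2
    have hlam0 : 0 < lam := lt_of_lt_of_le one_pos h3
    refine (hTraynor R₁ R₂ lam h1 h2 h3 h4).mono_right (polydisk_subset ?_ ?_)
    · intro i; fin_cases i
      · show (0:ℝ) ≤ C * (lam * R₁); positivity
      · show (0:ℝ) ≤ C * (R₂ / lam); positivity
    · intro i; fin_cases i
      · show C * (lam * R₁) ≤ C₁ * (lam * R₁)
        exact mul_le_mul_of_nonneg_right hCC₁ (by positivity)
      · show C * (R₂ / lam) ≤ C₁ * (R₂ / lam)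
        exact mul_le_mul_of_nonneg_right hCC₁ (by positivity)
  have hK : ∀ R₁ R₂ R₃ lam : ℝ, 0 < R₁ → R₁ ≤ R₂ → R₂ ≤ R₃ → 1 ≤ lam → lam ≤ R₂ / R₁ →
      SympEmbeds (polydisk ![R₁, R₂, R₃])
        (polydisk ![C₁ * R₁, C₁ * (R₂ / lam), C₁ * (lam * R₃)]) := by
    intro R₁ R₂ R₃ lam h1 h2 h3 h4 h5
    have hR₂ : 0 < R₂ := lt_of_lt_of_le h1 h2
    have hR₃ : 0 < R₃ := lt_of_lt_of_le hR₂ h3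
    have hlam0 : 0 < lam := lt_of_lt_of_le one_pos h4
    refine (hCatalyst R₁ R₂ R₃ lam h1 h2 h3 h4 h5).mono_right (polydisk_subset ?_ ?_)
    · intro i; fin_cases i
      · show (0:ℝ) ≤ C * R₁; positivity
      · show (0:ℝ) ≤ C * (R₂ / lam); positivity
      · show (0:ℝ) ≤ C * (lam * R₃); positivity
    · intro i; fin_cases i
      · show C * R₁ ≤ C₁ * R₁
        exact mul_le_mul_of_nonneg_right hCC₁ (by positivity)
      · show C * (R₂ / lam) ≤ C₁ * (R₂ / lam)
        exact mul_le_mul_of_nonneg_right hCC₁ (by positivity)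
      · show C * (lam * R₃) ≤ C₁ * (lam * R₃)
        exact mul_le_mul_of_nonneg_right hCC₁ (by positivity)
  refine ⟨C₁ ^ (4 * n + 4), by positivity, ?_⟩
  intro R R' hRpos hR'pos hRmono hR'mono hfirst hprodRR'
  -- index bookkeeping
  set z : Fin n := ⟨0, by omega⟩ with hzdef
  set sN : Fin n := ⟨n - 1, by omega⟩ with hsNdef
  have hzs : z ≠ sN := by
    simp only [hzdef, hsNdef, Ne, Fin.mk.injEq]
    omega
  have hz_le : ∀ i : Fin n, z ≤ i := fun i => by
    rw [Fin.le_def]; exact Nat.zero_le _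
  set F : Finset (Fin n) := Finset.univ.erase z with hFdef
  have hzF : z ∉ F := Finset.notMem_erase z _
  have hFcard : F.card = n - 1 := by
    rw [hFdef, Finset.card_erase_of_mem (Finset.mem_univ z), Finset.card_univ, Fintype.card_fin]
  have hsF : sN ∈ F := Finset.mem_erase.mpr ⟨Ne.symm hzs, Finset.mem_univ sN⟩
  have hmemF : ∀ i : Fin n, i ≠ z → i ∈ F :=
    fun i hi => Finset.mem_erase.mpr ⟨hi, Finset.mem_univ i⟩
  have hFscard : (F.erase sN).card = n - 2 := by
    rw [Finset.card_erase_of_mem hsF, hFcard]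
    omega
  -- quantities
  set Pi := ∏ i, R i with hPidef
  have hPipos : 0 < Pi := Finset.prod_pos fun i _ => hRpos i
  set Pf := ∏ i ∈ F, R i with hPfdef
  have hPfpos : 0 < Pf := Finset.prod_pos fun i _ => hRpos i
  have hPif : R z * Pf = Pi := Finset.mul_prod_erase Finset.univ R (Finset.mem_univ z)
  have hn0 : (n:ℝ) ≠ 0 := Nat.cast_ne_zero.mpr (by omega)
  set G := Pi ^ ((n:ℝ)⁻¹) with hGdef
  have hG0 : 0 < G := Real.rpow_pos_of_pos hPipos _
  have hGn : G ^ n = Pi := by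
    rw [hGdef, ← Real.rpow_natCast (Pi ^ ((n:ℝ)⁻¹)) n, ← Real.rpow_mul hPipos.le,
      inv_mul_cancel₀ hn0, Real.rpow_one]
  have hRz0 : 0 < R z := hRpos z
  have hRzG : R z ≤ G := by
    refine le_of_pow_le_pow_left₀ (by omega : n ≠ 0) hG0.le ?_
    rw [hGn]
    calc (R z) ^ n = ∏ _i : Fin n, R z := by
          rw [Finset.prod_const, Finset.card_univ, Fintype.card_fin]
      _ ≤ ∏ i, R i := Finset.prod_le_prod (fun _ _ => (hRpos z).le)
          (fun i _ => hRmono z i (hz_le i))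
  set T := min (R' z) G with hTdef
  have hT0 : 0 < T := lt_min (hR'pos z) hG0
  have hRzT : R z ≤ T := le_min hfirst hRzG
  have hTn : T ^ n ≤ Pi := by
    rw [← hGn]
    exact pow_le_pow_left₀ hT0.le (min_le_right _ _) n
  have hTR' : ∀ i, T ≤ R' i := fun i => le_trans (min_le_left _ _) (hR'mono z i (hz_le i))
  -- exponent bookkeeping
  have hTn1 : T ^ (n - 1) = T ^ (n - 2) * T := by
    rw [← pow_succ, show n - 2 + 1 = n - 1 from by omega]
  have hTnn : T ^ n = T ^ (n - 1) * T := by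
    rw [← pow_succ, show n - 1 + 1 = n from by omega]
  have hTn1pos : 0 < T ^ (n - 1) := pow_pos hT0 _
  have hTn2pos : 0 < T ^ (n - 2) := pow_pos hT0 _
  -- the two auxiliary radii
  set W := Pf / T ^ (n - 2) with hWdef
  set Ub := Pi / T ^ (n - 1) with hUdef
  have hW0 : 0 < W := div_pos hPfpos hTn2pos
  have hU0 : 0 < Ub := div_pos hPipos hTn1pos
  have hTn1Pf : T ^ (n - 1) ≤ Pf := by
    have h1 : T ^ (n - 1) * T ≤ Pf * T := by
      rw [← hTnn, mul_comm Pf T]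
      calc T ^ n ≤ Pi := hTn
        _ = R z * Pf := hPif.symm
        _ ≤ T * Pf := mul_le_mul_of_nonneg_right hRzT hPfpos.le
    exact le_of_mul_le_mul_right h1 hT0
  have hTW : T ≤ W := by
    rw [hWdef, le_div_iff₀ hTn2pos]
    calc T * T ^ (n - 2) = T ^ (n - 2) * T := mul_comm _ _
      _ = T ^ (n - 1) := hTn1.symm
      _ ≤ Pf := hTn1Pf
  have hTU : T ≤ Ub := by
    rw [hUdef, le_div_iff₀ hTn1pos]
    calc T * T ^ (n - 1) = T ^ (n - 1) * T := mul_comm _ _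
      _ = T ^ n := hTnn.symm
      _ ≤ Pi := hTn
  have hWRz : R z * W = T * Ub := by
    rw [hWdef, hUdef, mul_div_assoc', mul_div_assoc', div_eq_div_iff hTn2pos.ne' hTn1pos.ne',
      hTn1, ← hPif]
    ring
  -- Round 1 : equalize the non-catalyst coordinates, residual at sN
  set V₁ : Fin n → ℝ := fun i => if i = sN then W else T with hV₁def
  have hprod1 : Pf = ∏ i ∈ F, V₁ i := by
    have h1 : (∏ i ∈ F, V₁ i) = V₁ sN * ∏ i ∈ F.erase sN, V₁ i :=
      (Finset.mul_prod_erase F V₁ hsF).symm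
    have h2 : (∏ i ∈ F.erase sN, V₁ i) = ∏ _i ∈ F.erase sN, T :=
      Finset.prod_congr rfl fun i hi => by
        rw [hV₁def]; dsimp only; rw [if_neg (Finset.mem_erase.mp hi).1]
    have h3 : V₁ sN = W := by rw [hV₁def]; dsimp only; rw [if_pos rfl]
    rw [h1, h2, Finset.prod_const, hFscard, h3, hWdef, div_mul_cancel₀ _ hTn2pos.ne']
  have E1 := reach C₁ hC₁ hT hK z (n - 1) F hFcard hzF R V₁ hRpos
    (fun i _ => hRmono z i (hz_le i))
    (fun i _ => by
      rw [hV₁def]; dsimp only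
      split
      · exact le_trans hRzT hTW
      · exact hRzT)
    hprod1
  set A := C₁ ^ (2 * (n - 1)) with hAdef
  have hA0 : 0 < A := pow_pos hC₁0 _
  have hA1 : 1 ≤ A := one_le_pow₀ hC₁
  set Q₁ : Fin n → ℝ := fun i => if i = z then R z else V₁ i with hQ₁def
  have hQ₁pos : ∀ i, 0 < Q₁ i := fun i => by
    rw [hQ₁def]; dsimp only
    split
    · exact hRz0
    · rw [hV₁def]; dsimp only
      split
      · exact hW0
      · exact hT0
  have hD₁ : (fun i => A * (if i ∈ F then V₁ i else R i)) = fun i => A * Q₁ i := by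
    funext i
    rw [hQ₁def]; dsimp only
    rcases eq_or_ne i z with rfl | hiz
    · rw [if_neg hzF, if_pos rfl]
    · rw [if_pos (hmemF i hiz), if_neg hiz]
  rw [hD₁] at E1
  -- Round 2 : move mass into the catalyst coordinate
  have hQ₁z : Q₁ z = R z := by rw [hQ₁def]; dsimp only; rw [if_pos rfl]
  have hQ₁s : Q₁ sN = W := by
    rw [hQ₁def]; dsimp only
    rw [if_neg (Ne.symm hzs), hV₁def]; dsimp only; rw [if_pos rfl]
  have f2cond : (T / R z) ^ 2 ≤ (A * W) / (A * R z) := by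
    rw [mul_div_mul_left _ _ hA0.ne', div_pow, div_le_div_iff₀ (by positivity) hRz0]
    have hT2 : T ^ 2 ≤ R z * W := by
      calc T ^ 2 = T * T := pow_two T
        _ ≤ T * Ub := mul_le_mul_of_nonneg_left hTU hT0.le
        _ = R z * W := hWRz.symm
    calc T ^ 2 * R z ≤ (R z * W) * R z := mul_le_mul_of_nonneg_right hT2 hRz0.le
      _ = W * (R z) ^ 2 := by ring
  have f2 := hT (A * R z) (A * W) (T / R z) (by positivity)
    (mul_le_mul_of_nonneg_left (le_trans hRzT hTW) hA0.le)
    ((one_le_div hRz0).mpr hRzT) f2cond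
  have eq1 : C₁ * (T / R z * (A * R z)) = C₁ * (A * T) := by
    congr 1
    field_simp
  have eq2 : C₁ * (A * W / (T / R z)) = C₁ * (A * Ub) := by
    congr 1
    rw [div_div_eq_mul_div, div_eq_iff hT0.ne']
    linear_combination A * hWRz
  rw [eq1, eq2] at f2
  set D₂ : Fin n → ℝ := fun i =>
    if i = z then C₁ * (A * T) else if i = sN then C₁ * (A * Ub) else A * Q₁ i with hD₂def
  have E2 : SympEmbeds (polydisk fun i => A * Q₁ i) (polydisk D₂) := by
    refine applyAtInj ![z, sN] (vec2_inj hzs) f2 _ _ ?_ ?_ ?_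
    · intro j; fin_cases j
      · show A * Q₁ z = A * R z; rw [hQ₁z]
      · show A * Q₁ sN = A * W; rw [hQ₁s]
    · intro j; fin_cases j
      · show D₂ z = C₁ * (A * T)
        rw [hD₂def]; dsimp only; rw [if_pos rfl]
      · show D₂ sN = C₁ * (A * Ub)
        rw [hD₂def]; dsimp only; rw [if_neg (Ne.symm hzs), if_pos rfl]
    · intro x hx
      rw [mem_range_vec2] at hx
      push_neg at hx
      rw [hD₂def]; dsimp only; rw [if_neg hx.1, if_neg hx.2]
  set B := A * C₁ with hBdef
  have hB0 : 0 < B := mul_pos hA0 hC₁0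
  set Q₂ : Fin n → ℝ := fun i => if i = sN then Ub else T with hQ₂def
  have hQ₂pos : ∀ i, 0 < Q₂ i := fun i => by
    rw [hQ₂def]; dsimp only; split
    · exact hU0
    · exact hT0
  have hQ₂z : Q₂ z = T := by rw [hQ₂def]; dsimp only; rw [if_neg hzs]
  have E3 : SympEmbeds (polydisk D₂) (polydisk fun i => B * Q₂ i) := by
    refine sympEmbeds_of_subset (polydisk_subset ?_ ?_)
    · intro i
      rw [hD₂def]; dsimp only
      split
      · positivity
      · split
        · positivity
        · exact (mul_pos hA0 (hQ₁pos i)).le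
    · intro i
      rw [hD₂def, hQ₂def]; dsimp only
      rcases eq_or_ne i z with rfl | hiz
      · rw [if_pos rfl, if_neg hzs]
        exact le_of_eq (by rw [hBdef]; ring)
      · rw [if_neg hiz]
        rcases eq_or_ne i sN with rfl | his
        · rw [if_pos rfl, if_pos rfl]
          exact le_of_eq (by rw [hBdef]; ring)
        · rw [if_neg his, if_neg his]
          have hq : Q₁ i = T := by
            rw [hQ₁def]; dsimp only
            rw [if_neg hiz, hV₁def]; dsimp only; rw [if_neg his]
          rw [hq, hBdef]
          calc A * T ≤ A * T * C₁ := le_mul_of_one_le_right (by positivity) hC₁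
            _ = A * C₁ * T := by ring
  -- Round 3 : redistribute to (almost) the target radii, via water-filling
  have hwf1 : T ^ F.card ≤ Pi / T := by
    rw [hFcard, le_div_iff₀ hT0]
    calc T ^ (n - 1) * T = T ^ n := hTnn.symm
      _ ≤ Pi := hTn
  have hwf2 : Pi / T ≤ ∏ i ∈ F, R' i := by
    have hPs : R' z * ∏ i ∈ F, R' i = ∏ i, R' i :=
      Finset.mul_prod_erase Finset.univ R' (Finset.mem_univ z)
    rcases min_cases (R' z) G with ⟨hm, _⟩ | ⟨hm, hlt⟩
    · rw [← hTdef] at hm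
      rw [hm, div_le_iff₀ (hR'pos z)]
      calc Pi ≤ ∏ i, R' i := hprodRR'
        _ = R' z * ∏ i ∈ F, R' i := hPs.symm
        _ = (∏ i ∈ F, R' i) * R' z := mul_comm _ _
    · rw [← hTdef] at hm
      rw [hm]
      have hPiG : Pi / G = G ^ (n - 1) := by
        rw [div_eq_iff hG0.ne', ← pow_succ, show n - 1 + 1 = n from by omega, hGn]
      rw [hPiG]
      calc G ^ (n - 1) = ∏ _i ∈ F, G := by rw [Finset.prod_const, hFcard]
        _ ≤ ∏ i ∈ F, R' i := Finset.prod_le_prod (fun _ _ => hG0.le)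
            (fun i _ => le_trans hlt.le (hR'mono z i (hz_le i)))
  obtain ⟨v, hvb, hvp⟩ := waterfill hT0 F R' (Pi / T) (fun i _ => hTR' i) hwf1 hwf2
  have hprod3 : (∏ i ∈ F, (B * Q₂ i)) = ∏ i ∈ F, (B * v i) := by
    rw [show (∏ i ∈ F, (B * Q₂ i)) = (∏ _i ∈ F, B) * ∏ i ∈ F, Q₂ i from
        Finset.prod_mul_distrib,
      show (∏ i ∈ F, (B * v i)) = (∏ _i ∈ F, B) * ∏ i ∈ F, v i from Finset.prod_mul_distrib]
    congr 1
    have h1 : (∏ i ∈ F, Q₂ i) = Ub * T ^ (n - 2) := by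
      rw [← Finset.mul_prod_erase F Q₂ hsF]
      congr 1
      · rw [hQ₂def]; dsimp only; rw [if_pos rfl]
      · calc (∏ i ∈ F.erase sN, Q₂ i) = ∏ _i ∈ F.erase sN, T :=
              Finset.prod_congr rfl fun i hi => by
                rw [hQ₂def]; dsimp only; rw [if_neg (Finset.mem_erase.mp hi).1]
          _ = T ^ (n - 2) := by rw [Finset.prod_const, hFscard]
    have h2 : Ub * T ^ (n - 2) = Pi / T := by
      rw [hUdef, div_mul_eq_mul_div, div_eq_div_iff hTn1pos.ne' hT0.ne', hTn1]
      ring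
    rw [h1, h2]
    exact hvp.symm
  have E4 := reach C₁ hC₁ hT hK z (n - 1) F hFcard hzF
    (fun i => B * Q₂ i) (fun i => B * v i)
    (fun i => by exact mul_pos hB0 (hQ₂pos i))
    (fun i _ => by
      refine mul_le_mul_of_nonneg_left ?_ hB0.le
      rw [hQ₂z, hQ₂def]; dsimp only
      split
      · exact hTU
      · exact le_refl T)
    (fun i hi => by
      refine mul_le_mul_of_nonneg_left ?_ hB0.le
      rw [hQ₂z]
      exact (hvb i hi).1)
    hprod3
  -- final comparison with C' * R'
  have hABC' : A * B ≤ C₁ ^ (4 * n + 4) := by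
    rw [hBdef, hAdef]
    calc C₁ ^ (2 * (n - 1)) * (C₁ ^ (2 * (n - 1)) * C₁)
        = C₁ ^ (2 * (n - 1) + (2 * (n - 1) + 1)) := by rw [pow_add, pow_add, pow_one]
      _ ≤ C₁ ^ (4 * n + 4) := pow_le_pow_right₀ hC₁ (by omega)
  have E5 : SympEmbeds
      (polydisk fun i => C₁ ^ (2 * (n - 1)) * (if i ∈ F then B * v i else B * Q₂ i))
      (polydisk fun i => C₁ ^ (4 * n + 4) * R' i) := by
    refine sympEmbeds_of_subset (polydisk_subset ?_ ?_)
    · intro i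
      by_cases hiF : i ∈ F
      · rw [if_pos hiF]
        have := (hvb i hiF).1
        have hv0 : 0 < v i := lt_of_lt_of_le hT0 this
        positivity
      · rw [if_neg hiF]
        have := hQ₂pos i
        positivity
    · intro i
      by_cases hiF : i ∈ F
      · rw [if_pos hiF]
        have hv' := hvb i hiF
        have hv0 : 0 ≤ v i := le_trans hT0.le hv'.1
        calc C₁ ^ (2 * (n - 1)) * (B * v i) = (A * B) * v i := by rw [hAdef]; ring
          _ ≤ C₁ ^ (4 * n + 4) * v i := mul_le_mul_of_nonneg_right hABC' hv0
          _ ≤ C₁ ^ (4 * n + 4) * R' i := mul_le_mul_of_nonneg_left hv'.2 (by positivity)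
      · rw [if_neg hiF]
        have hiz : i = z := by
          by_contra h
          exact hiF (hmemF i h)
        subst hiz
        rw [hQ₂z]
        calc C₁ ^ (2 * (n - 1)) * (B * T) = (A * B) * T := by rw [hAdef]; ring
          _ ≤ C₁ ^ (4 * n + 4) * T := mul_le_mul_of_nonneg_right hABC' hT0.le
          _ ≤ C₁ ^ (4 * n + 4) * R' z := mul_le_mul_of_nonneg_left (min_le_left _ _)
              (by positivity)
  exact pd_trans (pd_trans (pd_trans (pd_trans E1 E2) E3) E4) E5
end
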